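/- arXiv:1201.1515 — 8 statements merged into one kernel-verified Lean document; each statement's English description precedes it below -/
import Mathlib

section
/- Let f : S^1 → ℝ be a continuous function with finitely many zeros. Then for every ε > 0 there exists a C^∞ function g : S^1 → ℝ such that sup |g - f| ≤ ε and g has no more zeros than f has. -/
section StmtZeroHelpers

open Real Set Function

lemma contDiff_finset_prod {ι : Type*} (s : Finset ι) (g : ι → ℝ → ℝ)
    (hg : ∀ i ∈ s, ContDiff ℝ (⊤ : ℕ∞) (g i)) :
    ContDiff ℝ (⊤ : ℕ∞) (fun x => ∏ i ∈ s, g i x) := by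
  classical
  induction s using Finset.cons_induction with
  | empty => simpa using contDiff_const (c := (1:ℝ))
  | cons a s ha ih =>
      simp only [Finset.prod_cons]
      exact (hg a (Finset.mem_cons_self a s)).mul
        (ih (fun i hi => hg i (Finset.mem_cons_of_mem hi)))


lemma sign_prod {n : ℕ} (xs : Fin (n+1) → ℝ) (d : Fin (n+1) → ℕ) (x : ℝ) (j : Fin (n+1))
    (h1 : ∀ i, i ≤ j → 0 < x - xs i ∧ x - xs i < 2*π)
    (h2 : ∀ i, j < i → -(2*π) < x - xs i ∧ x - xs i < 0) :
    0 < (∏ i, (Real.sin ((x - xs i)/2))^(d i))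
        * (-1:ℝ)^(∑ i ∈ Finset.univ.filter (fun i => j < i), d i) := by
  classical
  rw [← Finset.prod_filter_mul_prod_filter_not Finset.univ (fun i => i ≤ j)]
  set S0 := ∑ i ∈ Finset.univ.filter (fun i => j < i), d i with hS0
  set A := ∏ i ∈ Finset.univ.filter (fun i => i ≤ j), (Real.sin ((x - xs i)/2))^(d i) with hA
  have hpos : 0 < A := by
    apply Finset.prod_pos
    intro i hi
    simp only [Finset.mem_filter] at hi
    obtain ⟨hlt, hlt2⟩ := h1 i hi.2
    have : 0 < Real.sin ((x - xs i)/2) :=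
      Real.sin_pos_of_pos_of_lt_pi (by linarith) (by linarith)
    positivity
  have hfilter : Finset.univ.filter (fun i : Fin (n+1) => ¬ i ≤ j)
      = Finset.univ.filter (fun i => j < i) := by
    apply Finset.filter_congr; intro i _; simp [not_le]
  set P := ∏ i ∈ Finset.univ.filter (fun i => j < i), (-Real.sin ((x - xs i)/2))^(d i) with hP
  have hPpos : 0 < P := by
    apply Finset.prod_pos
    intro i hi
    simp only [Finset.mem_filter] at hi
    obtain ⟨hlt, hlt2⟩ := h2 i hi.2
    have : Real.sin ((x - xs i)/2) < 0 := by
      have := Real.sin_neg_of_neg_of_neg_pi_lt (x := (x - xs i)/2) (by linarith) (by linarith)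
      exact this
    have h0 : 0 < -Real.sin ((x - xs i)/2) := by linarith
    positivity
  have hneg : ∏ i ∈ Finset.univ.filter (fun i => ¬ i ≤ j), (Real.sin ((x - xs i)/2))^(d i)
      = ((-1:ℝ)^S0) * P := by
    rw [hfilter, hS0, ← Finset.prod_pow_eq_pow_sum, hP, ← Finset.prod_mul_distrib]
    apply Finset.prod_congr rfl
    intro i _
    rw [← mul_pow, neg_one_mul, neg_neg]
  rw [hneg]
  have hsq : ((-1:ℝ)^S0) * ((-1)^S0) = 1 := by
    rw [← pow_add]
    exact Even.neg_one_pow ⟨S0, rfl⟩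
  have : A * ((-1:ℝ)^S0 * P) * (-1)^S0 = A * P * (((-1:ℝ)^S0) * ((-1)^S0)) := by ring
  rw [this, hsq, mul_one]
  positivity

lemma sigma_R {n : ℕ} (σ : Fin (n+1) → ℝ) (d : Fin (n+1) → ℕ)
    (hd : ∀ i, (-1:ℝ)^(d i) = σ (i-1) * σ i)
    (hσ : ∀ i, σ i * σ i = 1) :
    ∀ j, σ j * (-1:ℝ)^(∑ i ∈ Finset.univ.filter (fun i => j < i), d i) = σ (Fin.last n) := by
  classical
  intro j
  induction j using Fin.reverseInduction with
  | last =>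
      have : Finset.univ.filter (fun i : Fin (n+1) => Fin.last n < i) = ∅ := by
        apply Finset.filter_false_of_mem
        intro i _
        simp [not_lt, Fin.le_last]
      rw [this]
      simp
  | cast i ih =>
      have hsucc_sub : i.succ - 1 = i.castSucc := by
        apply Fin.ext
        rw [Fin.coe_sub_one]
        simp [Fin.succ_ne_zero]
      have hfilt : Finset.univ.filter (fun k : Fin (n+1) => i.castSucc < k)
          = insert i.succ (Finset.univ.filter (fun k => i.succ < k)) := by
        ext k
        simp only [Finset.mem_filter, Finset.mem_univ, true_and, Finset.mem_insert]
        rw [Fin.castSucc_lt_iff_succ_le]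
        constructor
        · intro h
          rcases eq_or_lt_of_le h with h' | h'
          · left; exact h'.symm
          · right; exact h'
        · rintro (rfl | h)
          · exact le_refl _
          · exact h.le
      have hnotmem : i.succ ∉ Finset.univ.filter (fun k : Fin (n+1) => i.succ < k) := by
        simp
      rw [hfilt, Finset.sum_insert hnotmem, pow_add, hd i.succ, hsucc_sub]
      have := hσ i.castSucc
      calc σ i.castSucc * (σ i.castSucc * σ i.succ
            * (-1:ℝ)^(∑ k ∈ Finset.univ.filter (fun k => i.succ < k), d k))
          = (σ i.castSucc * σ i.castSucc) * (σ i.succ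
            * (-1:ℝ)^(∑ k ∈ Finset.univ.filter (fun k => i.succ < k), d k)) := by ring
        _ = σ i.succ * (-1:ℝ)^(∑ k ∈ Finset.univ.filter (fun k => i.succ < k), d k) := by
            rw [this, one_mul]
        _ = σ (Fin.last n) := ih

lemma parity_prod {n : ℕ} (σ : Fin (n+1) → ℝ) (d : Fin (n+1) → ℕ)
    (hd : ∀ i, (-1:ℝ)^(d i) = σ (i-1) * σ i)
    (hσ : ∀ i, σ i * σ i = 1) :
    ∏ i, (-1:ℝ)^(d i) = 1 := by
  classical
  calc ∏ i, (-1:ℝ)^(d i) = ∏ i, (σ (i-1) * σ i) := by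
        exact Finset.prod_congr rfl (fun i _ => hd i)
    _ = (∏ i, σ (i-1)) * (∏ i, σ i) := Finset.prod_mul_distrib
    _ = (∏ i, σ i) * (∏ i, σ i) := by
        congr 1
        exact Fintype.prod_equiv (Equiv.subRight (1 : Fin (n+1))) _ _ (fun i => rfl)
    _ = ∏ i, (σ i * σ i) := Finset.prod_mul_distrib.symm
    _ = ∏ i, (1:ℝ) := Finset.prod_congr rfl (fun i _ => hσ i)
    _ = 1 := Finset.prod_const_one


lemma contDiff_fourier_span (T : ℝ) (hT : Fact (0 < T))
    (p : C(AddCircle T, ℂ)) (hp : p ∈ Submodule.span ℂ (Set.range (@fourier T))) :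
    ContDiff ℝ (⊤ : ℕ∞) (fun x : ℝ => p (x : AddCircle T)) := by
  induction hp using Submodule.span_induction with
  | mem p hpmem =>
      obtain ⟨n, rfl⟩ := hpmem
      have h1 : ContDiff ℝ (⊤ : ℕ∞) (fun x : ℝ => Complex.exp ((2 * π * Complex.I * n / T) * x)) :=
        Complex.contDiff_exp.comp (contDiff_const.mul Complex.ofRealCLM.contDiff)
      have h2 : (fun x : ℝ => (fourier n (x : AddCircle T) : ℂ))
          = fun x : ℝ => Complex.exp ((2 * π * Complex.I * n / T) * x) := by
        funext x
        rw [fourier_coe_apply]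
        ring_nf
      rw [h2]; exact h1
  | zero => simpa using contDiff_const (c := (0:ℂ))
  | add p q hp hq ihp ihq => exact ihp.add ihq
  | smul c p hp ihp => exact contDiff_const.mul ihp

lemma analytic_periodic_approx (F : ℝ → ℝ) (hF : Continuous F)
    (hper : Function.Periodic F (2 * π)) {ρ : ℝ} (hρ : 0 < ρ) :
    ∃ P : ℝ → ℝ, ContDiff ℝ (⊤ : ℕ∞) P ∧ Function.Periodic P (2 * π) ∧ ∀ x, |P x - F x| ≤ ρ := by
  haveI hT : Fact (0 < 2 * π) := ⟨Real.two_pi_pos⟩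
  have hlift : Continuous (AddCircle.liftIco (2*π) 0 F) := by
    apply AddCircle.liftIco_continuous
    · simpa using (hper 0).symm
    · exact hF.continuousOn
  set Fc : C(AddCircle (2*π), ℂ) :=
    ⟨fun z => ((AddCircle.liftIco (2*π) 0 F z : ℝ) : ℂ), Complex.continuous_ofReal.comp hlift⟩
    with hFc
  have hdense := span_fourier_closure_eq_top (T := 2*π)
  have hFc_mem : Fc ∈ closure ((Submodule.span ℂ (Set.range (@fourier (2*π)))) : Set C(AddCircle (2*π), ℂ)) := by
    rw [← Submodule.topologicalClosure_coe, hdense]; trivial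
  obtain ⟨p, hpmem, hpdist⟩ := Metric.mem_closure_iff.mp hFc_mem ρ hρ
  refine ⟨fun x => (p (x : AddCircle (2*π))).re, ?_, ?_, ?_⟩
  · exact Complex.reCLM.contDiff.comp (contDiff_fourier_span _ hT p hpmem)
  · intro x
    simp [AddCircle.coe_add_period (2*π) x]
  · -- pointwise bound
    have key : ∀ x ∈ Ico (0:ℝ) (2*π), |(p (x : AddCircle (2*π))).re - F x| ≤ ρ := by
      intro x hx
      have hFcx : (Fc (x : AddCircle (2*π))) = ((F x : ℝ) : ℂ) := by
        simp only [hFc, ContinuousMap.coe_mk]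
        congr 1
        exact AddCircle.liftIco_coe_apply (by simpa using hx)
      have h1 : |(p (x : AddCircle (2*π))).re - F x|
          ≤ ‖p (x : AddCircle (2*π)) - Fc (x : AddCircle (2*π))‖ := by
        rw [hFcx]
        have := Complex.abs_re_le_norm (p (x : AddCircle (2*π)) - ((F x : ℝ) : ℂ))
        simpa using this
      have h2 : ‖p (x : AddCircle (2*π)) - Fc (x : AddCircle (2*π))‖
          = dist (p (x : AddCircle (2*π))) (Fc (x : AddCircle (2*π))) := by
        rw [Complex.dist_eq]
      have h3 : dist (p (x : AddCircle (2*π))) (Fc (x : AddCircle (2*π))) ≤ dist p Fc :=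
        ContinuousMap.dist_apply_le_dist _
      have h4 : dist p Fc ≤ ρ := by rw [dist_comm]; exact hpdist.le
      linarith
    intro x
    have hperP : Function.Periodic (fun x : ℝ => (p (x : AddCircle (2*π))).re) (2*π) := by
      intro y; simp [AddCircle.coe_add_period (2*π) y]
    set y := toIcoMod Real.two_pi_pos 0 x with hy
    have hymem : y ∈ Ico (0:ℝ) (2*π) := by simpa using toIcoMod_mem_Ico Real.two_pi_pos 0 x
    have hxy : y = x - toIcoDiv Real.two_pi_pos 0 x • (2*π) := by
      rw [hy, toIcoMod]
    have hPy : (p (y : AddCircle (2*π))).re = (p (x : AddCircle (2*π))).re := by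
      rw [hxy]; exact hperP.sub_zsmul_eq _
    have hFy : F y = F x := by rw [hxy]; exact hper.sub_zsmul_eq _
    show |(p (x : AddCircle (2*π))).re - F x| ≤ ρ
    rw [← hPy, ← hFy]
    exact key y hymem

private lemma stmt0_empty (f : ℝ → ℝ) (hf : Continuous f)
    (hper : Function.Periodic f (2 * Real.pi))
    (hfin : {x | x ∈ Set.Ico (0 : ℝ) (2 * Real.pi) ∧ f x = 0}.Finite)
    (ε : ℝ) (hε : 0 < ε)
    (hz : {x | x ∈ Set.Ico (0 : ℝ) (2 * Real.pi) ∧ f x = 0} = ∅) :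
    ∃ g : ℝ → ℝ, ContDiff ℝ (⊤ : ℕ∞) g ∧ Function.Periodic g (2 * Real.pi) ∧
      (∀ x, |g x - f x| ≤ ε) ∧
      {x | x ∈ Set.Ico (0 : ℝ) (2 * Real.pi) ∧ g x = 0}.ncard ≤
        {x | x ∈ Set.Ico (0 : ℝ) (2 * Real.pi) ∧ f x = 0}.ncard := by
  have hnz : ∀ x ∈ Ico (0:ℝ) (2*π), f x ≠ 0 := by
    intro x hx hfx
    have : x ∈ {x | x ∈ Set.Ico (0 : ℝ) (2 * Real.pi) ∧ f x = 0} := ⟨hx, hfx⟩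
    rw [hz] at this; exact this
  obtain ⟨x₀, hx₀mem, hx₀min⟩ := IsCompact.exists_isMinOn (isCompact_Icc (a := (0:ℝ)) (b := 2*π))
    ⟨0, by constructor <;> positivity⟩ (hf.abs.continuousOn)
  set m := |f x₀| with hm
  have hmpos : 0 < m := by
    rw [hm, abs_pos]
    rcases eq_or_lt_of_le hx₀mem.2 with h | h
    · rw [h]
      have := hper 0
      rw [zero_add] at this
      rw [this]
      exact hnz 0 ⟨le_refl _, Real.two_pi_pos⟩
    · exact hnz x₀ ⟨hx₀mem.1, h⟩
  obtain ⟨P, hP1, hP2, hP3⟩ := analytic_periodic_approx f hf hper (ρ := min ε (m/2))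
    (lt_min hε (by positivity))
  refine ⟨P, hP1, hP2, fun x => (hP3 x).trans (min_le_left _ _), ?_⟩
  have : {x | x ∈ Set.Ico (0 : ℝ) (2 * Real.pi) ∧ P x = 0} = ∅ := by
    ext x
    simp only [mem_setOf_eq, mem_empty_iff_false, iff_false, not_and]
    intro hx hPx
    have h1 : m ≤ |f x| := hx₀min ⟨hx.1, hx.2.le⟩
    have h2 : |P x - f x| ≤ m/2 := (hP3 x).trans (min_le_right _ _)
    rw [hPx] at h2
    rw [abs_sub_comm] at h2
    simp only [sub_zero] at h2
    linarith
  rw [this]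
  simp

private lemma stmt0_nonempty (f : ℝ → ℝ) (hf : Continuous f)
    (hper : Function.Periodic f (2 * Real.pi))
    (hfin : {x | x ∈ Set.Ico (0 : ℝ) (2 * Real.pi) ∧ f x = 0}.Finite)
    (ε : ℝ) (hε : 0 < ε)
    (hz : {x | x ∈ Set.Ico (0 : ℝ) (2 * Real.pi) ∧ f x = 0} ≠ ∅) :
    ∃ g : ℝ → ℝ, ContDiff ℝ (⊤ : ℕ∞) g ∧ Function.Periodic g (2 * Real.pi) ∧
      (∀ x, |g x - f x| ≤ ε) ∧
      {x | x ∈ Set.Ico (0 : ℝ) (2 * Real.pi) ∧ g x = 0}.ncard ≤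
        {x | x ∈ Set.Ico (0 : ℝ) (2 * Real.pi) ∧ f x = 0}.ncard := by
  classical
  -- enumerate the zeros in increasing order
  set Z := hfin.toFinset with hZdef
  have hZne : Z.Nonempty := by
    rw [hZdef, Set.Finite.toFinset_nonempty]
    exact Set.nonempty_iff_ne_empty.mpr hz
  obtain ⟨n, hn⟩ : ∃ n, Z.card = n + 1 := by
    have := Finset.card_pos.mpr hZne
    exact ⟨Z.card - 1, by omega⟩
  set e := Z.orderIsoOfFin hn with he
  set xs : Fin (n+1) → ℝ := fun i => (e i : ℝ) with hxs
  have hxs_mono : StrictMono xs := by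
    intro a b hab
    exact Subtype.coe_lt_coe.mpr (e.strictMono hab)
  have hxs_mem : ∀ i, xs i ∈ Ico (0:ℝ) (2*π) ∧ f (xs i) = 0 := by
    intro i
    exact hfin.mem_toFinset.mp (e i).2
  have hxs_surj : ∀ z, z ∈ Ico (0:ℝ) (2*π) → f z = 0 → ∃ i, xs i = z := by
    intro z hz1 hz2
    have hzZ : z ∈ Z := hfin.mem_toFinset.mpr ⟨hz1, hz2⟩
    obtain ⟨i, hi⟩ := e.surjective ⟨z, hzZ⟩
    exact ⟨i, congrArg Subtype.val hi⟩
  have hx0 : (0:ℝ) ≤ xs 0 := (hxs_mem 0).1.1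
  have hxlt : ∀ i, xs i < 2*π := fun i => (hxs_mem i).1.2
  have hx0le : ∀ i, xs 0 ≤ xs i := fun i => hxs_mono.monotone (Fin.zero_le i)
  -- the right endpoint of the arc starting at xs j
  set nxt : Fin (n+1) → ℝ :=
    fun j => if h : (j:ℕ)+1 ≤ n then xs ⟨(j:ℕ)+1, by omega⟩ else xs 0 + 2*π with hnxt
  have harc_lt : ∀ j, xs j < nxt j := by
    intro j
    simp only [hnxt]
    by_cases h : (j:ℕ)+1 ≤ n
    · rw [dif_pos h]
      exact hxs_mono (by rw [Fin.lt_def]; simp)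
    · rw [dif_neg h]
      have := hxlt j
      have := hx0
      linarith
  have hnxt_le : ∀ j, nxt j ≤ xs 0 + 2*π := by
    intro j
    simp only [hnxt]
    by_cases h : (j:ℕ)+1 ≤ n
    · rw [dif_pos h]
      have := hxlt ⟨(j:ℕ)+1, by omega⟩
      linarith
    · rw [dif_neg h]
  -- zeros inside the fundamental window
  have hzero_win : ∀ z ∈ Ico (xs 0) (xs 0 + 2*π), f z = 0 → ∃ i, z = xs i ∨ z = xs i + 2*π := by
    intro z hzmem hz0
    rcases lt_or_ge z (2*π) with hlt | hge
    · obtain ⟨i, hi⟩ := hxs_surj z ⟨le_trans hx0 hzmem.1, hlt⟩ hz0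
      exact ⟨i, Or.inl hi.symm⟩
    · have h1 : z - 2*π ∈ Ico (0:ℝ) (2*π) := by
        constructor
        · linarith
        · have := hzmem.2
          have := hxlt 0
          linarith
      have h2 : f (z - 2*π) = 0 := by
        have := hper (z - 2*π)
        simp only [sub_add_cancel] at this
        rw [this] at hz0
        exact hz0
      obtain ⟨i, hi⟩ := hxs_surj _ h1 h2
      exact ⟨i, Or.inr (by linarith [hi])⟩
  -- no zeros strictly inside an arc
  have harc_nz : ∀ j, ∀ x ∈ Ioo (xs j) (nxt j), f x ≠ 0 := by
    intro j x hx hfx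
    have hxwin : x ∈ Ico (xs 0) (xs 0 + 2*π) :=
      ⟨le_trans (hx0le j) hx.1.le, lt_of_lt_of_le hx.2 (hnxt_le j)⟩
    obtain ⟨i, hi | hi⟩ := hzero_win x hxwin hfx
    · -- x = xs i with xs j < xs i < nxt j
      subst hi
      have h1 : j < i := hxs_mono.lt_iff_lt.mp hx.1
      have h2 := hx.2
      simp only [hnxt] at h2
      by_cases h : (j:ℕ)+1 ≤ n
      · rw [dif_pos h] at h2
        have h3 : i < (⟨(j:ℕ)+1, by omega⟩ : Fin (n+1)) := hxs_mono.lt_iff_lt.mp h2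
        rw [Fin.lt_def] at h1 h3
        simp at h3
        omega
      · rw [dif_neg h] at h2
        have : (i:ℕ) ≤ n := by omega
        have h4 : (j:ℕ) = n := by have := j.isLt; omega
        rw [Fin.lt_def, h4] at h1
        omega
    · -- x = xs i + 2π
      subst hi
      have h2 := hx.2
      simp only [hnxt] at h2
      by_cases h : (j:ℕ)+1 ≤ n
      · rw [dif_pos h] at h2
        have := hxlt ⟨(j:ℕ)+1, by omega⟩
        have := (hxs_mem i).1.1
        linarith
      · rw [dif_neg h] at h2
        have h3 : xs i < xs 0 := by linarith
        have := hx0le i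
        linarith
  -- constant sign on arcs
  have hsame : ∀ j, ∀ a ∈ Ioo (xs j) (nxt j), ∀ b ∈ Ioo (xs j) (nxt j),
      0 < f a → 0 < f b := by
    intro j a ha b hb hfa
    by_contra hfb
    push_neg at hfb
    have hfb' : f b < 0 := lt_of_le_of_ne hfb (harc_nz j b hb)
    have h0 : (0:ℝ) ∈ uIcc (f a) (f b) := by
      rw [Set.mem_uIcc]
      right; exact ⟨hfb'.le, hfa.le⟩
    have := intermediate_value_uIcc (f := f) (a := a) (b := b) hf.continuousOn h0
    obtain ⟨z, hz1, hz2⟩ := this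
    have hzin : z ∈ Ioo (xs j) (nxt j) := by
      rw [Set.mem_uIcc] at hz1
      constructor
      · rcases hz1 with ⟨h1, _⟩ | ⟨h1, _⟩
        · exact lt_of_lt_of_le ha.1 h1
        · exact lt_of_lt_of_le hb.1 h1
      · rcases hz1 with ⟨_, h2⟩ | ⟨_, h2⟩
        · exact lt_of_le_of_lt h2 hb.2
        · exact lt_of_le_of_lt h2 ha.2
    exact harc_nz j z hzin hz2
  -- midpoints, signs
  set mid : Fin (n+1) → ℝ := fun j => (xs j + nxt j)/2 with hmid
  have hmid_mem : ∀ j, mid j ∈ Ioo (xs j) (nxt j) := by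
    intro j
    have := harc_lt j
    constructor
    · simp only [hmid]; linarith
    · simp only [hmid]; linarith
  set Sp : Fin (n+1) → Prop := fun j => 0 < f (mid j) with hSpdef
  have hsign : ∀ j, ∀ x ∈ Ioo (xs j) (nxt j), (0 < f x ↔ Sp j) := by
    intro j x hx
    constructor
    · intro h; exact hsame j x hx (mid j) (hmid_mem j) h
    · intro h; exact hsame j (mid j) (hmid_mem j) x hx h
  set σ : Fin (n+1) → ℝ := fun j => if Sp j then 1 else -1 with hσdef
  have hσsq : ∀ i, σ i * σ i = 1 := by
    intro i; simp only [hσdef]; split <;> norm_num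
  set d : Fin (n+1) → ℕ := fun i => if (Sp (i-1) ↔ Sp i) then 2 else 1 with hddef
  have hdpos : ∀ i, d i ≠ 0 := by
    intro i; simp only [hddef]; split <;> norm_num
  have hdneg : ∀ i, (-1:ℝ)^(d i) = σ (i-1) * σ i := by
    intro i
    simp only [hddef, hσdef]
    by_cases h1 : Sp (i-1) <;> by_cases h2 : Sp i <;> simp [h1, h2] <;> norm_num
  set q : ℝ → ℝ := fun x => ∏ i, (Real.sin ((x - xs i)/2))^(d i) with hqdef
  set lst : Fin (n+1) := Fin.last n with hlst
  set qt : ℝ → ℝ := fun x => σ lst * q x with hqt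
  -- q is smooth
  have hqcd : ContDiff ℝ (⊤ : ℕ∞) q := by
    apply contDiff_finset_prod
    intro i _
    have hcd : ContDiff ℝ (⊤ : ℕ∞) (fun x : ℝ => Real.sin ((x - xs i)/2)) :=
      Real.contDiff_sin.comp ((contDiff_id.sub contDiff_const).div_const 2)
    exact hcd.pow (d i)
  have hσlst_ne : σ lst ≠ 0 := by
    simp only [hσdef]; split <;> norm_num
  have hqtcd : ContDiff ℝ (⊤ : ℕ∞) qt := contDiff_const.mul hqcd
  -- q is periodic
  have hqper : Function.Periodic q (2*π) := by
    intro x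
    simp only [hqdef]
    calc ∏ i, (Real.sin ((x + 2*π - xs i)/2))^(d i)
        = ∏ i, ((-1:ℝ)^(d i) * (Real.sin ((x - xs i)/2))^(d i)) := by
          apply Finset.prod_congr rfl; intro i _
          have harg : (x + 2*π - xs i)/2 = (x - xs i)/2 + π := by ring
          rw [harg, Real.sin_add_pi, neg_pow]
      _ = (∏ i, (-1:ℝ)^(d i)) * ∏ i, (Real.sin ((x - xs i)/2))^(d i) :=
          Finset.prod_mul_distrib
      _ = ∏ i, (Real.sin ((x - xs i)/2))^(d i) := by
          rw [parity_prod σ d hdneg hσsq, one_mul]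
  have hqtper : Function.Periodic qt (2*π) := by
    intro x; simp only [hqt, hqper x]
  -- |q| ≤ 1
  have hqabs : ∀ x, |q x| ≤ 1 := by
    intro x
    simp only [hqdef]
    rw [Finset.abs_prod]
    apply Finset.prod_le_one
    · intro i _; positivity
    · intro i _
      rw [abs_pow]
      apply pow_le_one₀ (abs_nonneg _)
      exact abs_le.mpr ⟨Real.neg_one_le_sin _, Real.sin_le_one _⟩
  have hqtabs : ∀ x, |qt x| ≤ 1 := by
    intro x
    simp only [hqt, abs_mul]
    have : |σ lst| = 1 := by simp only [hσdef]; split <;> norm_num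
    rw [this, one_mul]
    exact hqabs x
  -- zeros of q are zeros of f
  have hq0 : ∀ x, q x = 0 → f x = 0 := by
    intro x hx
    simp only [hqdef] at hx
    rw [Finset.prod_eq_zero_iff] at hx
    obtain ⟨i, _, hi⟩ := hx
    have hsin : Real.sin ((x - xs i)/2) = 0 := by
      exact (pow_eq_zero_iff (hdpos i)).mp hi
    rw [Real.sin_eq_zero_iff] at hsin
    obtain ⟨k, hk⟩ := hsin
    have hxval : x - (k:ℝ) * (2*π) = xs i := by
      have hπ := Real.pi_ne_zero
      nlinarith [hk]
    calc f x = f (x - (k:ℝ) * (2*π)) := (hper.sub_int_mul_eq k).symm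
      _ = f (xs i) := by rw [hxval]
      _ = 0 := (hxs_mem i).2
  have hqt0 : ∀ x, qt x = 0 → f x = 0 := by
    intro x hx
    simp only [hqt, mul_eq_zero] at hx
    rcases hx with hx | hx
    · exact absurd hx hσlst_ne
    · exact hq0 x hx
  -- sign of qt on arcs
  have hq5 : ∀ j, ∀ x ∈ Ioo (xs j) (nxt j), 0 < qt x * σ j := by
    intro j x hx
    have h1 : ∀ i, i ≤ j → 0 < x - xs i ∧ x - xs i < 2*π := by
      intro i hij
      constructor
      · have : xs i ≤ xs j := hxs_mono.monotone hij
        have := hx.1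
        linarith
      · have h2 := hx.2
        have h3 := hnxt_le j
        have h4 := (hxs_mem i).1.1
        have h5 := hx0le i
        linarith
    have h2 : ∀ i, j < i → -(2*π) < x - xs i ∧ x - xs i < 0 := by
      intro i hij
      have hjn : (j:ℕ)+1 ≤ n := by
        have h5 := i.isLt
        rw [Fin.lt_def] at hij
        omega
      have hnle : nxt j ≤ xs i := by
        simp only [hnxt]
        rw [dif_pos hjn]
        apply hxs_mono.monotone
        rw [Fin.le_def]
        simp only []
        rw [Fin.lt_def] at hij
        omega
      constructor
      · have h6 := hxlt i
        have h7 := hx.1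
        have h8 := hx0le j
        have h9 := hx0
        linarith
      · have := hx.2
        linarith
    have hA := sign_prod xs d x j h1 h2
    have hB := sigma_R σ d hdneg hσsq j
    have h3 : qt x * σ j = (σ j * σ j) *
        ((∏ i, (Real.sin ((x - xs i)/2))^(d i))
          * (-1:ℝ)^(∑ i ∈ Finset.univ.filter (fun i => j < i), d i)) := by
      simp only [hqt, hqdef]
      rw [← hB]
      ring
    rw [h3, hσsq j, one_mul]
    exact hA
  -- the clamped function F
  set δ := ε/2 with hδdef
  have hδ : 0 < δ := by positivity
  set F : ℝ → ℝ := fun x => f x - max (-δ) (min δ (f x)) with hFdef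
  have hFcont : Continuous F := hf.sub (continuous_const.max (continuous_const.min hf))
  have hFper : Function.Periodic F (2*π) := by
    intro x; simp only [hFdef, hper x]
  have hFclose : ∀ x, |F x - f x| ≤ δ := by
    intro x
    simp only [hFdef]
    have h1 : -δ ≤ max (-δ) (min δ (f x)) := le_max_left _ _
    have h2 : max (-δ) (min δ (f x)) ≤ δ :=
      max_le (by linarith) (min_le_left _ _)
    rw [abs_le]
    constructor <;> linarith
  have hF0 : ∀ x, |f x| ≤ δ → F x = 0 := by
    intro x hx
    rw [abs_le] at hx
    simp only [hFdef]
    rw [min_eq_right hx.2, max_eq_right hx.1, sub_self]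
  have hFpos : ∀ x, δ < f x → 0 < F x := by
    intro x hx
    simp only [hFdef]
    rw [min_eq_left hx.le, max_eq_right (by linarith)]
    linarith
  have hFneg : ∀ x, f x < -δ → F x < 0 := by
    intro x hx
    simp only [hFdef]
    rw [min_eq_right (by linarith), max_eq_left (by linarith)]
    linarith
  have hFne : ∀ x, F x ≠ 0 → δ < |f x| := by
    intro x hx
    by_contra hc
    push_neg at hc
    exact hx (hF0 x hc)
  -- the nonnegative quotient h
  set h : ℝ → ℝ := fun x => if qt x = 0 then 0 else F x / qt x with hhdef
  have hFq : ∀ x, F x = qt x * h x := by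
    intro x
    simp only [hhdef]
    by_cases hq : qt x = 0
    · rw [if_pos hq, hq, zero_mul]
      apply hF0
      rw [hqt0 x hq, abs_zero]
      exact hδ.le
    · rw [if_neg hq]
      field_simp
  have hhper : Function.Periodic h (2*π) := by
    intro x; simp only [hhdef, hqtper x, hFper x]
  have hhcont : Continuous h := by
    rw [continuous_iff_continuousAt]
    intro x
    by_cases hq : qt x = 0
    · -- near x, F vanishes, so h vanishes
      have hfx : f x = 0 := hqt0 x hq
      have hev : ∀ᶠ y in nhds x, f y ∈ Ioo (-δ) δ := by
        apply hf.continuousAt.preimage_mem_nhds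
        apply Ioo_mem_nhds <;> (rw [hfx]; linarith)
      have hev2 : ∀ᶠ y in nhds x, h y = 0 := by
        apply hev.mono
        intro y hy
        have hFy : F y = 0 := hF0 y (abs_le.mpr ⟨hy.1.le, hy.2.le⟩)
        simp only [hhdef, hFy]
        split <;> simp
      have hx0' : h x = 0 := by
        simp only [hhdef, if_pos hq]
      have : h =ᶠ[nhds x] (fun _ => h x) := by
        apply hev2.mono
        intro y hy
        rw [hy, hx0']
      exact this.continuousAt
    · have hev : ∀ᶠ y in nhds x, qt y ≠ 0 :=
        (hqtcd.continuous.continuousAt).eventually_ne hq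
      have hca : ContinuousAt (fun y => F y / qt y) x :=
        hFcont.continuousAt.div (hqtcd.continuous.continuousAt) hq
      apply hca.congr
      apply hev.mono
      intro y hy
      simp only [hhdef, if_neg hy]
  -- h is nonnegative
  have hmod : ∀ (u : ℝ → ℝ), Function.Periodic u (2*π) → ∀ x,
      u (toIcoMod Real.two_pi_pos (xs 0) x) = u x := by
    intro u hu x
    have : toIcoMod Real.two_pi_pos (xs 0) x = x - toIcoDiv Real.two_pi_pos (xs 0) x • (2*π) := by
      rw [toIcoMod]
    rw [this]
    exact hu.sub_zsmul_eq _
  have hhnn : ∀ x, 0 ≤ h x := by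
    intro x
    by_cases hq : qt x = 0
    · simp only [hhdef, if_pos hq]; exact le_refl _
    · by_cases hFx : F x = 0
      · simp only [hhdef, if_neg hq, hFx, zero_div]; exact le_refl _
      · set y := toIcoMod Real.two_pi_pos (xs 0) x with hydef
        have hymem : y ∈ Ico (xs 0) (xs 0 + 2*π) := toIcoMod_mem_Ico Real.two_pi_pos (xs 0) x
        have hfy : f y = f x := hmod f hper x
        have hFy : F y = F x := hmod F hFper x
        have hqty : qt y = qt x := hmod qt hqtper x
        have hfyne : f y ≠ 0 := by
          intro hc
          apply hFx
          rw [← hFy]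
          apply hF0
          rw [hc, abs_zero]
          exact hδ.le
        -- find the arc containing y
        have hS : (Finset.univ.filter (fun i => xs i < y)).Nonempty := by
          refine ⟨0, ?_⟩
          rw [Finset.mem_filter]
          refine ⟨Finset.mem_univ _, ?_⟩
          rcases eq_or_lt_of_le hymem.1 with heq | hlt
          · exfalso; apply hfyne; rw [← heq]; exact (hxs_mem 0).2
          · exact hlt
        set j := (Finset.univ.filter (fun i => xs i < y)).max' hS with hjdef
        have hjmem := (Finset.univ.filter (fun i : Fin (n+1) => xs i < y)).max'_mem hS
        rw [Finset.mem_filter] at hjmem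
        have hyj : xs j < y := hjmem.2
        have hynxt : y < nxt j := by
          simp only [hnxt]
          by_cases hc : (j:ℕ)+1 ≤ n
          · rw [dif_pos hc]
            rcases lt_trichotomy y (xs ⟨(j:ℕ)+1, by omega⟩) with h' | h' | h'
            · exact h'
            · exfalso; apply hfyne; rw [h']; exact (hxs_mem _).2
            · exfalso
              have : (⟨(j:ℕ)+1, by omega⟩ : Fin (n+1)) ∈
                  Finset.univ.filter (fun i => xs i < y) := by
                rw [Finset.mem_filter]; exact ⟨Finset.mem_univ _, h'⟩
              have hle : (⟨(j:ℕ)+1, by omega⟩ : Fin (n+1)) ≤ j :=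
                Finset.le_max' _ _ this
              rw [Fin.le_def] at hle
              simp only [] at hle
              omega
          · rw [dif_neg hc]
            exact hymem.2
        have hymemIoo : y ∈ Ioo (xs j) (nxt j) := ⟨hyj, hynxt⟩
        have hq5y := hq5 j y hymemIoo
        have hsy := hsign j y hymemIoo
        have hFy_ne : F y ≠ 0 := by rw [hFy]; exact hFx
        have hfabs := hFne y hFy_ne
        simp only [hhdef, if_neg hq]
        rw [← hFy, ← hqty]
        by_cases hSpj : Sp j
        · have hfy_pos : 0 < f y := hsy.mpr hSpj
          have hqty_pos : 0 < qt y := by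
            have hσj : σ j = 1 := by simp only [hσdef, if_pos hSpj]
            have h' := hq5y
            rw [hσj, mul_one] at h'
            exact h'
          have hFy_pos : 0 < F y := by
            apply hFpos
            rw [abs_of_pos hfy_pos] at hfabs
            exact hfabs
          exact (div_pos hFy_pos hqty_pos).le
        · have hfy_neg : f y < 0 := by
            rcases lt_trichotomy (f y) 0 with h' | h' | h'
            · exact h'
            · exact absurd h' hfyne
            · exact absurd (hsy.mp h') hSpj
          have hqty_neg : qt y < 0 := by
            have hσj : σ j = -1 := by simp only [hσdef, if_neg hSpj]
            have h' := hq5y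
            rw [hσj] at h'
            nlinarith
          have hFy_neg : F y < 0 := by
            apply hFneg
            rw [abs_of_neg hfy_neg] at hfabs
            linarith
          exact div_nonneg_of_nonpos hFy_neg.le hqty_neg.le
  -- approximate h, and assemble
  set ρ := ε/6 with hρdef
  have hρ : 0 < ρ := by positivity
  obtain ⟨G, hGcd, hGper, hGclose⟩ := analytic_periodic_approx h hhcont hhper hρ
  set g : ℝ → ℝ := fun x => qt x * (G x + 2*ρ) with hgdef
  have hGpos : ∀ x, 0 < G x + 2*ρ := by
    intro x
    have h1 := hGclose x
    have h2 := hhnn x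
    rw [abs_le] at h1
    linarith [h1.1]
  refine ⟨g, ?_, ?_, ?_, ?_⟩
  · exact hqtcd.mul (hGcd.add contDiff_const)
  · intro x; simp only [hgdef, hqtper x, hGper x]
  · intro x
    have h1 : g x - f x = qt x * ((G x + 2*ρ) - h x) + (F x - f x) := by
      simp only [hgdef]
      rw [hFq x]
      ring
    have h2 : |qt x * ((G x + 2*ρ) - h x)| ≤ 1 * (ρ + 2*ρ) := by
      rw [abs_mul]
      apply mul_le_mul (hqtabs x) _ (abs_nonneg _) zero_le_one
      have : (G x + 2*ρ) - h x = (G x - h x) + 2*ρ := by ring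
      rw [this]
      calc |(G x - h x) + 2*ρ| ≤ |G x - h x| + |2*ρ| := abs_add_le _ _
        _ ≤ ρ + 2*ρ := by
            have := hGclose x
            rw [abs_of_pos (by positivity : (0:ℝ) < 2*ρ)]
            linarith
    calc |g x - f x| ≤ |qt x * ((G x + 2*ρ) - h x)| + |F x - f x| := by
          rw [h1]; exact abs_add_le _ _
      _ ≤ 1 * (ρ + 2*ρ) + δ := add_le_add h2 (hFclose x)
      _ = ε := by rw [hρdef, hδdef]; ring
  · apply Set.ncard_le_ncard _ hfin
    intro x hxmem
    obtain ⟨hx1, hx2⟩ := hxmem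
    refine ⟨hx1, ?_⟩
    simp only [hgdef] at hx2
    rcases mul_eq_zero.mp hx2 with hc | hc
    · exact hqt0 x hc
    · exact absurd hc (hGpos x).ne'


end StmtZeroHelpers

/-- Every continuous `2π`-periodic function `f : ℝ → ℝ` (i.e. a function on
`S¹ ≃ ℝ/2πℤ`) with finitely many zeros can be approximated, within any `ε > 0` in the sup norm,
by a `C^∞` `2π`-periodic function `g` having no more zeros than `f` has. -/
theorem stmt_0 (f : ℝ → ℝ) (hf : Continuous f)
    (hper : Function.Periodic f (2 * Real.pi))
    (hfin : {x | x ∈ Set.Ico (0 : ℝ) (2 * Real.pi) ∧ f x = 0}.Finite)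
    (ε : ℝ) (hε : 0 < ε) :
    ∃ g : ℝ → ℝ, ContDiff ℝ (⊤ : ℕ∞) g ∧ Function.Periodic g (2 * Real.pi) ∧
      (∀ x, |g x - f x| ≤ ε) ∧
      {x | x ∈ Set.Ico (0 : ℝ) (2 * Real.pi) ∧ g x = 0}.ncard ≤
        {x | x ∈ Set.Ico (0 : ℝ) (2 * Real.pi) ∧ f x = 0}.ncard := by
  by_cases hz : {x | x ∈ Set.Ico (0 : ℝ) (2 * Real.pi) ∧ f x = 0} = ∅
  · exact stmt0_empty f hf hper hfin ε hε hz
  · exact stmt0_nonempty f hf hper hfin ε hε hz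
end

section
/- Let f : [-a,a] → ℝ be continuous, C^2 on [-a,0) ∪ (0,a] with f'' ≠ 0 there. Then for every ε > 0 there exists a continuous g : [-a,a] → ℝ, C^2 on [-a,0) ∪ (0,a], such that g ≥ f, g(0) > f(0), g = f on neighborhoods of -a and a, sup|g - f| ≤ ε, and g'' has no more zeros in [-a,0) ∪ (0,a] than f'' has (in particular g'' ≠ 0 on [-a,0) ∪ (0,a]). -/
/-!
Add a small multiple `δ φ` of a smooth bump `φ` centred at `0`, equal to `1` on `[-a/4, a/4]` and
vanishing outside `(-a/2, a/2)`. Then `g = f + δ φ` lies above `f`, is strictly above it at `0`,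
agrees with `f` near `±a`, and differs from it by at most `δ`. On `|x| < a/4` the bump is flat, so
`g'' = f''`; on the compact set `a/4 ≤ |x| ≤ a` the continuous function `|f''|` has a positive
minimum while `φ''` is bounded, so `g'' = f'' + δ φ''` cannot vanish once `δ` is small.
-/

open Set Metric Filter Topology

namespace ContDiffBump

variable {c : ℝ} (φ : ContDiffBump c)

theorem deriv_deriv_eq_zero_of_mem_ball {x : ℝ} (hx : x ∈ ball c φ.rIn) :
    deriv (deriv φ) x = 0 := by
  have hφ : (φ : ℝ → ℝ) =ᶠ[𝓝 x] fun _ => 1 :=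
    eventually_of_mem (isOpen_ball.mem_nhds hx) fun y hy =>
      φ.one_of_mem_closedBall (ball_subset_closedBall hy)
  simp [hφ.deriv.deriv_eq]

theorem continuous_deriv_deriv : Continuous (deriv (deriv φ)) :=
  (φ.contDiff.iterate_deriv 2).continuous

end ContDiffBump

theorem IsCompact.exists_pos_le_forall_add_mul_ne_zero {X : Type*} [TopologicalSpace X]
    {K : Set X} (hK : IsCompact K) {u v : X → ℝ} (hu : ContinuousOn u K)
    (hv : ContinuousOn v K) (hu0 : ∀ x ∈ K, u x ≠ 0) {ε : ℝ} (hε : 0 < ε) :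
    ∃ δ, 0 < δ ∧ δ ≤ ε ∧ ∀ x ∈ K, u x + δ * v x ≠ 0 := by
  obtain ⟨m, hm0, hm⟩ := hK.exists_forall_le' hu.abs fun x hx => abs_pos.2 (hu0 x hx)
  obtain ⟨M, hM⟩ := hK.exists_bound_of_continuousOn hv
  refine ⟨min ε (m / (|M| + 1)), by positivity, min_le_left _ _, fun x hx hzero => ?_⟩
  set δ := min ε (m / (|M| + 1))
  have hvM : |v x| ≤ |M| := (hM x hx).trans (le_abs_self M)
  have hδm : δ * (|M| + 1) ≤ m := (le_div_iff₀ (by positivity)).1 (min_le_right _ _)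
  have hsmall : δ * |v x| < m := by nlinarith [hδm, (by positivity : 0 < δ)]
  have hux : |u x| = δ * |v x| := by
    rw [eq_neg_of_add_eq_zero_left hzero, abs_neg, abs_mul, abs_of_pos (by positivity : 0 < δ)]
  linarith [hm x hx]

/-- (Lemma 4.4 of the paper.) Let `f : [-a,a] → ℝ` be continuous, `C²` on
`S = [-a,0) ∪ (0,a]` with `f'' ≠ 0` there.  For every `ε > 0` there is a continuous
`g : [-a,a] → ℝ`, `C²` on `S`, with `g ≥ f`, `g(0) > f(0)`, `g = f` near `±a`,
`sup |g - f| ≤ ε`, and `g'' ≠ 0` on `S` (so `g''` has no more zeros than `f''`,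
which has none on `S`). -/
theorem stmt_4 (a ε : ℝ) (ha : 0 < a) (hε : 0 < ε) (f f' f'' : ℝ → ℝ)
    (hfc : ContinuousOn f (Set.Icc (-a) a))
    (hd1 : ∀ x ∈ Set.Ico (-a) 0 ∪ Set.Ioc 0 a,
      HasDerivWithinAt f (f' x) (Set.Icc (-a) a) x)
    (hd2 : ∀ x ∈ Set.Ico (-a) 0 ∪ Set.Ioc 0 a,
      HasDerivWithinAt f' (f'' x) (Set.Icc (-a) a) x)
    (hf''c : ContinuousOn f'' (Set.Ico (-a) 0 ∪ Set.Ioc 0 a))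
    (hne : ∀ x ∈ Set.Ico (-a) 0 ∪ Set.Ioc 0 a, f'' x ≠ 0) :
    ∃ g g' g'' : ℝ → ℝ,
      ContinuousOn g (Set.Icc (-a) a) ∧
      (∀ x ∈ Set.Ico (-a) 0 ∪ Set.Ioc 0 a,
        HasDerivWithinAt g (g' x) (Set.Icc (-a) a) x) ∧
      (∀ x ∈ Set.Ico (-a) 0 ∪ Set.Ioc 0 a,
        HasDerivWithinAt g' (g'' x) (Set.Icc (-a) a) x) ∧
      ContinuousOn g'' (Set.Ico (-a) 0 ∪ Set.Ioc 0 a) ∧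
      (∀ x ∈ Set.Icc (-a) a, f x ≤ g x) ∧
      f 0 < g 0 ∧
      (∃ δ > (0 : ℝ), ∀ x ∈ Set.Icc (-a) a, (x ≤ -a + δ ∨ a - δ ≤ x) → g x = f x) ∧
      (∀ x ∈ Set.Icc (-a) a, |g x - f x| ≤ ε) ∧
      (∀ x ∈ Set.Ico (-a) 0 ∪ Set.Ioc 0 a, g'' x ≠ 0) := by
  let φ : ContDiffBump (0 : ℝ) := ⟨a / 4, a / 2, by positivity, by linarith⟩
  have hφ : Differentiable ℝ φ := (φ.contDiff (n := 1)).differentiable one_ne_zero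
  have hφ' : Differentiable ℝ (deriv φ) := (φ.contDiff.iterate_deriv 1).differentiable (by simp)
  have hKS : Icc (-a) (-(a / 4)) ∪ Icc (a / 4) a ⊆ Ico (-a) 0 ∪ Ioc 0 a :=
    union_subset_union (Icc_subset_Ico_right (by linarith)) (Icc_subset_Ioc_left (by linarith))
  obtain ⟨δ, hδ0, hδε, hδ⟩ := (isCompact_Icc.union isCompact_Icc).exists_pos_le_forall_add_mul_ne_zero
    (hf''c.mono hKS) φ.continuous_deriv_deriv.continuousOn (fun x hx => hne x (hKS hx)) hε
  refine ⟨fun x => f x + δ * φ x, fun x => f' x + δ * deriv φ x,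
    fun x => f'' x + δ * deriv (deriv φ) x,
    hfc.add (continuous_const.mul φ.continuous).continuousOn,
    fun x hx => (hd1 x hx).add ((hφ x).hasDerivAt.const_mul δ).hasDerivWithinAt,
    fun x hx => (hd2 x hx).add ((hφ' x).hasDerivAt.const_mul δ).hasDerivWithinAt,
    hf''c.add (continuous_const.mul φ.continuous_deriv_deriv).continuousOn,
    fun x _ => le_add_of_nonneg_right (mul_nonneg hδ0.le φ.nonneg), ?_,
    ⟨a / 2, by positivity, fun x hx hend => ?_⟩, fun x _ => ?_, fun x hx => ?_⟩
  · simpa [φ.one_of_mem_closedBall (mem_closedBall_self φ.rIn_pos.le)] using hδ0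
  · have hφx : φ x = 0 := φ.zero_of_le_dist <| by
      change a / 2 ≤ dist x 0
      rw [Real.dist_eq, sub_zero, le_abs]
      rcases hend with h | h
      exacts [Or.inr (by linarith), Or.inl (by linarith)]
    simp [hφx]
  · rw [add_sub_cancel_left, abs_of_nonneg (mul_nonneg hδ0.le φ.nonneg)]
    exact (mul_le_of_le_one_right hδ0.le φ.le_one).trans hδε
  · by_cases hflat : x ∈ ball (0 : ℝ) φ.rIn
    · simpa [φ.deriv_deriv_eq_zero_of_mem_ball hflat] using hne x hx
    · refine hδ x ?_
      change ¬ |x - 0| < a / 4 at hflat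
      rw [sub_zero, abs_lt, not_and_or, not_lt, not_lt] at hflat
      rcases hx with hx | hx
      · exact Or.inl ⟨hx.1, hflat.resolve_right (by linarith [hx.2])⟩
      · exact Or.inr ⟨hflat.resolve_left (by linarith [hx.1]), hx.2⟩
end

section
/- Let f : [0,a] → ℝ be C^1 on [0,a] and C^2 on (0,a], with f(0) = f'(0) = 0 and f > 0, f'' > 0 on (0,a]. Then there exists g : [0,a] → ℝ, C^1 on [0,a] and C^2 on (0,a], such that g(0) = 0, g'(0) > 0, g ≥ f on [0,a], g'' > 0 on (0,a], and g = f on a neighborhood of a. -/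
/-!
Add to `f` a small multiple `ε φ` of a smooth cutoff `φ ≥ 0` of the identity: `φ x = x` near `0`
and `φ = 0` near `a`. Then `g = f + ε φ` agrees with `f` near `a`, dominates `f`, and has
`g'(0) = ε > 0`. Near `0` we have `φ'' = 0`, so `g'' = f'' > 0` there; on the remaining compact
interval `f''` is bounded below by a positive constant and `φ''` is bounded, so `g'' > 0` for small `ε`.
-/

open Set
open scoped ContDiff

noncomputable def cutoffId (b c x : ℝ) : ℝ := x * Real.smoothTransition ((c - x) / (c - b))

namespace cutoffId

variable {b c x : ℝ}

theorem contDiff (b c : ℝ) : ContDiff ℝ ∞ (cutoffId b c) :=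
  contDiff_id.mul (Real.smoothTransition.contDiff.comp
    ((contDiff_const.sub contDiff_id).div_const _))

theorem eq_self (hbc : b < c) (hx : x ≤ b) : cutoffId b c x = x := by
  have : 1 ≤ (c - x) / (c - b) := (one_le_div (by linarith)).2 (by linarith)
  simp [cutoffId, Real.smoothTransition.one_of_one_le this]

theorem eq_zero (hbc : b < c) (hx : c ≤ x) : cutoffId b c x = 0 := by
  have : (c - x) / (c - b) ≤ 0 := div_nonpos_of_nonpos_of_nonneg (by linarith) (by linarith)
  simp [cutoffId, Real.smoothTransition.zero_of_nonpos this]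

theorem nonneg (hx : 0 ≤ x) : 0 ≤ cutoffId b c x :=
  mul_nonneg hx (Real.smoothTransition.nonneg _)

theorem eventuallyEq_id (hbc : b < c) (hx : x < b) : cutoffId b c =ᶠ[nhds x] id :=
  Filter.eventuallyEq_of_mem (Iio_mem_nhds hx) fun _ hy => eq_self hbc (le_of_lt hy)

theorem deriv_eq_one (hbc : b < c) (hx : x < b) : deriv (cutoffId b c) x = 1 := by
  rw [(eventuallyEq_id hbc hx).deriv_eq, deriv_id]

theorem deriv_deriv_eq_zero (hbc : b < c) (hx : x < b) : deriv (deriv (cutoffId b c)) x = 0 := by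
  rw [(eventuallyEq_id hbc hx).deriv.deriv_eq, deriv_id', deriv_const]

end cutoffId

theorem IsCompact.exists_pos_forall_pos_add_mul {K : Set ℝ} (hK : IsCompact K) {u v : ℝ → ℝ}
    (hu : ContinuousOn u K) (hv : ContinuousOn v K) (hpos : ∀ x ∈ K, 0 < u x) :
    ∃ ε > 0, ∀ x ∈ K, 0 < u x + ε * v x := by
  obtain ⟨C, hC⟩ := hK.exists_bound_of_continuousOn
    (hv.div hu fun x hx => (hpos x hx).ne')
  -- `|C|` because `C` may be negative when `K` is empty
  refine ⟨1 / (|C| + 1), by positivity, fun x hx => ?_⟩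
  have hux := hpos x hx
  have hw : |v x / u x| ≤ C := hC x hx
  have hsmall : |1 / (|C| + 1) * (v x / u x)| < 1 := by
    rw [abs_mul, abs_of_pos (by positivity), div_mul_eq_mul_div, one_mul,
      div_lt_one (by positivity)]
    linarith [le_abs_self C]
  have hfactor : u x + 1 / (|C| + 1) * v x = u x * (1 + 1 / (|C| + 1) * (v x / u x)) := by
    field_simp
  rw [hfactor]
  exact mul_pos hux (by linarith [neg_abs_le (1 / (|C| + 1) * (v x / u x))])

theorem stmt_5_general (a : ℝ) (ha : 0 < a) (f f' f'' : ℝ → ℝ)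
    (hd1 : ∀ x ∈ Set.Icc 0 a, HasDerivWithinAt f (f' x) (Set.Icc 0 a) x)
    (hf'c : ContinuousOn f' (Set.Icc 0 a))
    (hd2 : ∀ x ∈ Set.Ioc 0 a, HasDerivWithinAt f' (f'' x) (Set.Icc 0 a) x)
    (hf''c : ContinuousOn f'' (Set.Ioc 0 a))
    (hf0 : f 0 = 0) (hf'0 : f' 0 = 0)
    (hf''pos : ∀ x ∈ Set.Ioc 0 a, 0 < f'' x) :
    ∃ g g' g'' : ℝ → ℝ,
      (∀ x ∈ Set.Icc 0 a, HasDerivWithinAt g (g' x) (Set.Icc 0 a) x) ∧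
      ContinuousOn g' (Set.Icc 0 a) ∧
      (∀ x ∈ Set.Ioc 0 a, HasDerivWithinAt g' (g'' x) (Set.Icc 0 a) x) ∧
      ContinuousOn g'' (Set.Ioc 0 a) ∧
      g 0 = 0 ∧ 0 < g' 0 ∧
      (∀ x ∈ Set.Icc 0 a, f x ≤ g x) ∧
      (∀ x ∈ Set.Ioc 0 a, 0 < g'' x) ∧
      (∃ δ > (0 : ℝ), ∀ x ∈ Set.Icc 0 a, a - δ ≤ x → g x = f x) := by
  have hbc : a / 3 < 2 * a / 3 := by linarith
  set φ := cutoffId (a / 3) (2 * a / 3)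
  obtain ⟨hφd, hφ'⟩ := contDiff_infty_iff_deriv.1 (cutoffId.contDiff (a / 3) (2 * a / 3))
  obtain ⟨hφ'd, hφ''⟩ := contDiff_infty_iff_deriv.1 hφ'
  have hKsub : Icc (a / 3) a ⊆ Ioc 0 a := fun x hx => ⟨by linarith [hx.1], hx.2⟩
  obtain ⟨ε, hε, hεK⟩ := isCompact_Icc.exists_pos_forall_pos_add_mul (hf''c.mono hKsub)
    hφ''.continuous.continuousOn fun x hx => hf''pos x (hKsub hx)
  refine ⟨fun x => f x + ε * φ x, fun x => f' x + ε * deriv φ x,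
    fun x => f'' x + ε * deriv (deriv φ) x, fun x hx => ?_, ?_, fun x hx => ?_, ?_, ?_, ?_,
    fun x hx => ?_, fun x hx => ?_, ⟨a / 3, by positivity, fun x _ hx => ?_⟩⟩
  · exact (hd1 x hx).add ((hφd x).hasDerivAt.const_mul ε).hasDerivWithinAt
  · exact hf'c.add (continuous_const.mul hφ'.continuous).continuousOn
  · exact (hd2 x hx).add ((hφ'd x).hasDerivAt.const_mul ε).hasDerivWithinAt
  · exact hf''c.add (continuous_const.mul hφ''.continuous).continuousOn
  · simp [hf0, φ, cutoffId.eq_self hbc (by linarith : (0 : ℝ) ≤ a / 3)]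
  · simp [hf'0, φ, cutoffId.deriv_eq_one hbc (by linarith : (0 : ℝ) < a / 3), hε]
  · linarith [mul_nonneg hε.le (cutoffId.nonneg (b := a / 3) (c := 2 * a / 3) hx.1)]
  · rcases lt_or_ge x (a / 3) with hx3 | hx3
    · simpa [φ, cutoffId.deriv_deriv_eq_zero hbc hx3] using hf''pos x hx
    · exact hεK x ⟨hx3, hx.2⟩
  · simp [φ, cutoffId.eq_zero hbc (by linarith : 2 * a / 3 ≤ x)]

/-- (Lemma 5.9 of the paper.) Let `f : [0,a] → ℝ` be `C¹` on `[0,a]` and `C²`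
on `(0,a]`, with `f(0) = f'(0) = 0` and `f > 0`, `f'' > 0` on `(0,a]`.  Then there exists
`g : [0,a] → ℝ`, `C¹` on `[0,a]` and `C²` on `(0,a]`, with `g(0) = 0`, `g'(0) > 0`,
`g ≥ f` on `[0,a]`, `g'' > 0` on `(0,a]`, and `g = f` near `a`. -/
theorem stmt_5 (a : ℝ) (ha : 0 < a) (f f' f'' : ℝ → ℝ)
    (hd1 : ∀ x ∈ Set.Icc 0 a, HasDerivWithinAt f (f' x) (Set.Icc 0 a) x)
    (hf'c : ContinuousOn f' (Set.Icc 0 a))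
    (hd2 : ∀ x ∈ Set.Ioc 0 a, HasDerivWithinAt f' (f'' x) (Set.Icc 0 a) x)
    (hf''c : ContinuousOn f'' (Set.Ioc 0 a))
    (hf0 : f 0 = 0) (hf'0 : f' 0 = 0)
    (hfpos : ∀ x ∈ Set.Ioc 0 a, 0 < f x)
    (hf''pos : ∀ x ∈ Set.Ioc 0 a, 0 < f'' x) :
    ∃ g g' g'' : ℝ → ℝ,
      (∀ x ∈ Set.Icc 0 a, HasDerivWithinAt g (g' x) (Set.Icc 0 a) x) ∧
      ContinuousOn g' (Set.Icc 0 a) ∧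
      (∀ x ∈ Set.Ioc 0 a, HasDerivWithinAt g' (g'' x) (Set.Icc 0 a) x) ∧
      ContinuousOn g'' (Set.Ioc 0 a) ∧
      g 0 = 0 ∧ 0 < g' 0 ∧
      (∀ x ∈ Set.Icc 0 a, f x ≤ g x) ∧
      (∀ x ∈ Set.Ioc 0 a, 0 < g'' x) ∧
      (∃ δ > (0 : ℝ), ∀ x ∈ Set.Icc 0 a, a - δ ≤ x → g x = f x) :=
  stmt_5_general a ha f f' f'' hd1 hf'c hd2 hf''c hf0 hf'0 hf''pos
end

section
/- Let f : [-a,a] → ℝ be C^2 with f(0) = f'(0) = 0 and f'' ≠ 0 on [-a,0) ∪ (0,a]. Then there exists a C^2 function g : [-a,a] → ℝ with g(0) = 0 and g'(0) ≠ 0, such that g'' ≠ 0 on [-a,0) ∪ (0,a], g = f near ±a, g ≥ f on [0,a], and g ≤ f on [-a,0]. Moreover if f''(0) ≠ 0 then g''(0) ≠ 0. -/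
/-!
Take `g = f + p` with `p x = c * x * φ x`, where `φ` is a smooth bump equal to `1` on
`[-a/4, a/4]` and vanishing off `(-a/2, a/2)`. Near `0` the correction is linear, so `p'' = 0`
there while `g'(0) = c ≠ 0`. On the compact set `a/4 ≤ |x| ≤ a` the continuous, nonvanishing `f''`
satisfies `|f''| ≥ m > 0`, and `c` is taken so small that `|p''| < m`; hence `g''` never vanishes
off `0`. Since `p` has the sign of `x`, `g ≥ f` on `[0,a]` and `g ≤ f` on `[-a,0]`.
-/

open Set Topology

lemma IsCompact.exists_pos_le_norm {α E : Type*} [TopologicalSpace α] [NormedAddCommGroup E]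
    {K : Set α} {u : α → E} (hK : IsCompact K) (hu : ContinuousOn u K)
    (hne : ∀ x ∈ K, u x ≠ 0) : ∃ m > 0, ∀ x ∈ K, m ≤ ‖u x‖ := by
  rcases K.eq_empty_or_nonempty with rfl | hKne
  · exact ⟨1, one_pos, by simp⟩
  obtain ⟨x₀, hx₀, hmin⟩ := hK.exists_isMinOn hKne hu.norm
  exact ⟨‖u x₀‖, norm_pos_iff.2 (hne x₀ hx₀), fun x hx => hmin hx⟩

lemma add_ne_zero_of_norm_lt {E : Type*} [NormedAddCommGroup E] {u v : E} (h : ‖v‖ < ‖u‖) :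
    u + v ≠ 0 := by
  intro huv
  rw [eq_neg_of_add_eq_zero_left huv, norm_neg] at h
  exact lt_irrefl _ h

namespace ContDiffBump

variable (φ : ContDiffBump (0 : ℝ))

noncomputable def truncatedId (x : ℝ) : ℝ := x * φ x

lemma contDiff_truncatedId {n : ℕ∞} : ContDiff ℝ n φ.truncatedId :=
  contDiff_id.mul φ.contDiff

lemma hasCompactSupport_truncatedId : HasCompactSupport φ.truncatedId :=
  φ.hasCompactSupport.mul_left

variable {φ} {x : ℝ}

lemma truncatedId_eventuallyEq_id (hx : |x| < φ.rIn) : φ.truncatedId =ᶠ[𝓝 x] id := by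
  have hball : Metric.ball (0 : ℝ) φ.rIn ∈ 𝓝 x :=
    Metric.isOpen_ball.mem_nhds (by simpa using hx)
  filter_upwards [hball] with y hy
  simp [truncatedId, φ.one_of_mem_closedBall (Metric.ball_subset_closedBall hy)]

lemma deriv_truncatedId_of_abs_lt (hx : |x| < φ.rIn) : deriv φ.truncatedId x = 1 := by
  simp [(truncatedId_eventuallyEq_id hx).deriv_eq]

lemma deriv_deriv_truncatedId_of_abs_lt (hx : |x| < φ.rIn) :
    deriv (deriv φ.truncatedId) x = 0 := by
  simp [(truncatedId_eventuallyEq_id hx).deriv.deriv_eq]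

lemma truncatedId_of_rOut_le_abs (hx : φ.rOut ≤ |x|) : φ.truncatedId x = 0 := by
  simp [truncatedId, φ.zero_of_le_dist (by simpa using hx)]

lemma truncatedId_nonneg (hx : 0 ≤ x) : 0 ≤ φ.truncatedId x :=
  mul_nonneg hx φ.nonneg

lemma truncatedId_nonpos (hx : x ≤ 0) : φ.truncatedId x ≤ 0 :=
  mul_nonpos_of_nonpos_of_nonneg hx φ.nonneg

variable (φ)

lemma exists_norm_deriv_deriv_truncatedId_le :
    ∃ B, ∀ x, ‖deriv (deriv φ.truncatedId) x‖ ≤ B :=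
  have hC1 : ContDiff ℝ 1 (deriv φ.truncatedId) :=
    (contDiff_succ_iff_deriv (n := 1)).1 φ.contDiff_truncatedId |>.2.2
  (hC1.continuous_deriv le_rfl).bounded_above_of_compact_support
    φ.hasCompactSupport_truncatedId.deriv.deriv

end ContDiffBump

lemma exists_cutoff_with_small_second_deriv {r R m : ℝ} (hr : 0 < r) (hrR : r < R) (hm : 0 < m) :
    ∃ p : ℝ → ℝ, ContDiff ℝ 2 p ∧ p 0 = 0 ∧ deriv p 0 ≠ 0 ∧
      (∀ x, |x| < r → deriv (deriv p) x = 0) ∧ (∀ x, ‖deriv (deriv p) x‖ < m) ∧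
      (∀ x, R ≤ |x| → p x = 0) ∧ (∀ x, 0 ≤ x → 0 ≤ p x) ∧ (∀ x, x ≤ 0 → p x ≤ 0) := by
  let φ : ContDiffBump (0 : ℝ) := ⟨r, R, hr, hrR⟩
  obtain ⟨B, hB⟩ := φ.exists_norm_deriv_deriv_truncatedId_le
  have hB0 : 0 ≤ B := (norm_nonneg _).trans (hB 0)
  set c := m / (B + 1) with hc
  have hc0 : 0 < c := by positivity
  have hcB : c * B < m := by
    rw [hc, div_mul_eq_mul_div, div_lt_iff₀ (by positivity)]
    nlinarith
  have hderiv2 : deriv (deriv fun x => c * φ.truncatedId x) =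
      fun x => c * deriv (deriv φ.truncatedId) x := by
    simp only [deriv_const_mul_field']
  refine ⟨fun x => c * φ.truncatedId x, contDiff_const.mul φ.contDiff_truncatedId, ?_, ?_, ?_, ?_,
    ?_, ?_, ?_⟩
  · simp [ContDiffBump.truncatedId]
  · simpa [deriv_const_mul_field', ContDiffBump.deriv_truncatedId_of_abs_lt (φ := φ) (x := 0)
      (by simpa using hr)] using hc0.ne'
  · intro x hx
    simp [ContDiffBump.deriv_deriv_truncatedId_of_abs_lt (φ := φ) hx]
  · intro x
    rw [hderiv2, norm_mul, Real.norm_of_nonneg hc0.le]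
    exact (mul_le_mul_of_nonneg_left (hB x) hc0.le).trans_lt hcB
  · intro x hx
    simp [ContDiffBump.truncatedId_of_rOut_le_abs (φ := φ) hx]
  · intro x hx
    exact mul_nonneg hc0.le (ContDiffBump.truncatedId_nonneg hx)
  · intro x hx
    exact mul_nonpos_of_nonneg_of_nonpos hc0.le (ContDiffBump.truncatedId_nonpos hx)

/-- (Lemma 6.2 of the paper.) Let `f : [-a,a] → ℝ` be `C²` with
`f(0) = f'(0) = 0` and `f'' ≠ 0` on `[-a,0) ∪ (0,a]`.  Then there exists a `C²` function
`g : [-a,a] → ℝ` with `g(0) = 0`, `g'(0) ≠ 0`, `g'' ≠ 0` on `[-a,0) ∪ (0,a]`, `g = f` near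
`±a`, `g ≥ f` on `[0,a]` and `g ≤ f` on `[-a,0]`; moreover if `f''(0) ≠ 0` then `g''(0) ≠ 0`. -/
theorem stmt_6 (a : ℝ) (ha : 0 < a) (f f' f'' : ℝ → ℝ)
    (hd1 : ∀ x ∈ Set.Icc (-a) a, HasDerivWithinAt f (f' x) (Set.Icc (-a) a) x)
    (hd2 : ∀ x ∈ Set.Icc (-a) a, HasDerivWithinAt f' (f'' x) (Set.Icc (-a) a) x)
    (hf''c : ContinuousOn f'' (Set.Icc (-a) a))
    (hf0 : f 0 = 0) (hf'0 : f' 0 = 0)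
    (hne : ∀ x ∈ Set.Ico (-a) 0 ∪ Set.Ioc 0 a, f'' x ≠ 0) :
    ∃ g g' g'' : ℝ → ℝ,
      (∀ x ∈ Set.Icc (-a) a, HasDerivWithinAt g (g' x) (Set.Icc (-a) a) x) ∧
      (∀ x ∈ Set.Icc (-a) a, HasDerivWithinAt g' (g'' x) (Set.Icc (-a) a) x) ∧
      ContinuousOn g'' (Set.Icc (-a) a) ∧
      g 0 = 0 ∧ g' 0 ≠ 0 ∧
      (∀ x ∈ Set.Ico (-a) 0 ∪ Set.Ioc 0 a, g'' x ≠ 0) ∧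
      (∃ δ > (0 : ℝ), ∀ x ∈ Set.Icc (-a) a, (x ≤ -a + δ ∨ a - δ ≤ x) → g x = f x) ∧
      (∀ x ∈ Set.Icc 0 a, f x ≤ g x) ∧
      (∀ x ∈ Set.Icc (-a) 0, g x ≤ f x) ∧
      (f'' 0 ≠ 0 → g'' 0 ≠ 0) := by
  have hpunctured : ∀ x ∈ Icc (-a) a, x ≠ 0 → x ∈ Ico (-a) 0 ∪ Ioc 0 a := fun x hx hx0 =>
    (lt_or_gt_of_ne hx0).imp (fun h => ⟨hx.1, h⟩) (fun h => ⟨h, hx.2⟩)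
  have ha4 : 0 < a / 4 := by positivity
  obtain ⟨m, hm, hmK⟩ :=
    (isCompact_Icc.inter_right (isClosed_le continuous_const continuous_abs)).exists_pos_le_norm
      (hf''c.mono inter_subset_left)
      fun x hx => hne x (hpunctured x hx.1 (abs_pos.1 (ha4.trans_le hx.2)))
  obtain ⟨p, hp, hp0, hp'0, hp''_small, hp''_lt, hp_far, hp_nonneg, hp_nonpos⟩ :=
    exists_cutoff_with_small_second_deriv (r := a / 4) (R := a / 2) ha4 (by linarith) hm
  have hp' : ContDiff ℝ 1 (deriv p) := (contDiff_succ_iff_deriv (n := 1)).1 hp |>.2.2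
  refine ⟨f + p, f' + deriv p, f'' + deriv (deriv p), fun x hx => ?_, fun x hx => ?_,
    hf''c.add (hp'.continuous_deriv le_rfl).continuousOn, by simp [hf0, hp0],
    by simpa [hf'0] using hp'0, fun x hx => ?_, ⟨a / 2, by positivity, fun x _ hx => ?_⟩,
    fun x hx => by simpa using hp_nonneg x hx.1, fun x hx => by simpa using hp_nonpos x hx.2,
    fun h => by simpa [hp''_small 0 (by simpa using ha)] using h⟩
  · exact (hd1 x hx).add (hp.differentiable (by norm_num) x).hasDerivAt.hasDerivWithinAt
  · exact (hd2 x hx).add (hp'.differentiable one_ne_zero x).hasDerivAt.hasDerivWithinAt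
  · by_cases hxr : |x| < a / 4
    · simpa [hp''_small x hxr] using hne x hx
    · have hxa : x ∈ Icc (-a) a :=
        hx.elim (fun h => ⟨h.1, by linarith [h.2]⟩) (fun h => ⟨by linarith [h.1], h.2⟩)
      exact add_ne_zero_of_norm_lt ((hp''_lt x).trans_le (hmK x ⟨hxa, not_lt.1 hxr⟩))
  · have hxR : a / 2 ≤ |x| := le_abs'.2 (hx.imp (fun h => by linarith) (fun h => by linarith))
    simp [hp_far x hxR]
end

section
/- Let g(x) = λ(x³ + x) with λ > 0, and let f : [a,b] → ℝ (a < 0 < b) be C^2 with f(0) = f'(0) = 0, f'' > 0 on (0,b], f'' < 0 on [a,0). Then for λ sufficiently small: g(b) < f(b), g(a) > f(a), g > f on an interval (0,b') with 0 < b' < b maximal, and g < f on an interval (a',0) with a < a' < 0 maximal; and the function F defined by F = g on [a',b'], F = f elsewhere, is convex on [0,b] and concave on [a,0], with F'' vanishing only at 0 (where defined). -/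
/-!
Since `f'' > 0` on `(0, b]` and `f(0) = f'(0) = 0`, `f` is strictly convex on `[0, b]` and
`f(b) > 0`; symmetrically `f` is strictly concave on `[a, 0]` and `f(a) < 0`, so every small
`λ > 0` gives `g(b) < f(b)` and `g(a) > f(a)`. Because `g'(0) = λ > 0 = f'(0)`, `g > f` just to
the right of `0` and `g < f` just to the left, so `b'` and `a'` can be taken to be the first
crossings of the two graphs on either side of `0`.

On `[0, b]` the glued function `F` is convex on `[0, b']` and on `[b', b]`, dominates the convex
function `f` and agrees with it at `b'`. A chord of `F` over an interval containing `b'` therefore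
lies above `f`, hence above `F(b')`, and then above `F` on both pieces: `F` is convex. Concavity on
`[a, 0]` is the mirror image. Finally, at any `x ≠ 0` the one-sided second derivative of `F` is
`g''(x) = 6λx` or `f''(x)`, neither of which vanishes.
-/

open Set Filter Topology

lemma ConvexOn.le_affine_of_mem_Icc {s : Set ℝ} {h : ℝ → ℝ} (hh : ConvexOn ℝ s h)
    {x y z p q : ℝ} (hx : x ∈ s) (hy : y ∈ s) (hz : z ∈ Icc x y)
    (hhx : h x ≤ p + q * x) (hhy : h y ≤ p + q * y) : h z ≤ p + q * z := by
  have hconv : ConvexOn ℝ s fun t => h t + -q * t :=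
    hh.add ((LinearMap.mulLeft ℝ (-q)).convexOn hh.1)
  have := (hconv.le_on_segment hx hy (segment_eq_Icc (hz.1.trans hz.2) ▸ hz)).trans
    (max_le (c := p) (by linarith) (by linarith))
  linarith

theorem convexOn_of_inter_Iic_of_inter_Ici {s : Set ℝ} {F f : ℝ → ℝ} {c : ℝ}
    (hl : ConvexOn ℝ (s ∩ Iic c) F) (hr : ConvexOn ℝ (s ∩ Ici c) F) (hf : ConvexOn ℝ s f)
    (hfF : ∀ x ∈ s, f x ≤ F x) (hc : F c = f c) : ConvexOn ℝ s F := by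
  refine LinearOrder.convexOn_of_lt hf.1 fun x hx y hy hxy a b ha hb hab => ?_
  rcases le_or_gt y c with hyc | hcy
  · exact hl.2 ⟨hx, hxy.le.trans hyc⟩ ⟨hy, hyc⟩ ha.le hb.le hab
  rcases le_or_gt c x with hcx | hxc
  · exact hr.2 ⟨hx, hcx⟩ ⟨hy, hcx.trans hxy.le⟩ ha.le hb.le hab
  -- the chord `t ↦ p + q * t` of `F` over `[x, y]` lies above `f`, hence above `F c = f c`
  set q := (F y - F x) / (y - x)
  set p := F x - q * x
  have hLx : F x = p + q * x := by ring
  have hLy : F y = p + q * y := by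
    simp only [p, q]; field_simp [(sub_pos.2 hxy).ne']; ring
  have hcs : c ∈ s := hf.1.ordConnected.out hx hy ⟨hxc.le, hcy.le⟩
  have hLc : F c ≤ p + q * c := hc ▸ hf.le_affine_of_mem_Icc hx hy ⟨hxc.le, hcy.le⟩
    ((hfF x hx).trans hLx.le) ((hfF y hy).trans hLy.le)
  have hz : a • x + b • y ∈ Icc x y := by
    rw [← segment_eq_Icc hxy.le]; exact ⟨a, b, ha.le, hb.le, hab, rfl⟩
  have hFz : F (a • x + b • y) ≤ p + q * (a • x + b • y) := by
    rcases le_total (a • x + b • y) c with hzc | hcz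
    · exact hl.le_affine_of_mem_Icc ⟨hx, hxc.le⟩ ⟨hcs, self_mem_Iic⟩ ⟨hz.1, hzc⟩ hLx.le hLc
    · exact hr.le_affine_of_mem_Icc ⟨hcs, self_mem_Ici⟩ ⟨hy, hcy.le⟩ ⟨hcz, hz.2⟩ hLc hLy.le
  calc F (a • x + b • y) ≤ p + q * (a • x + b • y) := hFz
    _ = a • F x + b • F y := by
      rw [hLx, hLy, smul_eq_mul, smul_eq_mul, smul_eq_mul, smul_eq_mul]
      linear_combination -p * hab

theorem concaveOn_of_inter_Iic_of_inter_Ici {s : Set ℝ} {F f : ℝ → ℝ} {c : ℝ}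
    (hl : ConcaveOn ℝ (s ∩ Iic c) F) (hr : ConcaveOn ℝ (s ∩ Ici c) F) (hf : ConcaveOn ℝ s f)
    (hFf : ∀ x ∈ s, F x ≤ f x) (hc : F c = f c) : ConcaveOn ℝ s F := by
  rw [← neg_convexOn_iff] at hl hr hf ⊢
  exact convexOn_of_inter_Iic_of_inter_Ici hl hr hf (fun x hx => neg_le_neg (hFf x hx))
    (by simp [hc])

lemma ContinuousOn.exists_first_zero {φ : ℝ → ℝ} {p q : ℝ} (hpq : p < q)
    (hφ : ContinuousOn φ (Icc p q)) (hp : ∀ᶠ x in 𝓝[>] p, 0 < φ x) (hq : φ q < 0) :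
    ∃ c ∈ Ioo p q, φ c = 0 ∧ ∀ x ∈ Ioo p c, 0 < φ x := by
  obtain ⟨t, hpt, ht⟩ := mem_nhdsGT_iff_exists_Ioc_subset.1 hp
  have hφt : 0 < φ t := ht ⟨hpt, le_rfl⟩
  have htq : t < q := lt_of_not_ge fun h => (ht ⟨hpq, h⟩ : 0 < φ q).not_gt hq
  set S := Icc t q ∩ φ ⁻¹' Iic 0
  have hS : IsClosed S := (hφ.mono (Icc_subset_Icc_left hpt.le)).preimage_isClosed_of_isClosed
    isClosed_Icc isClosed_Iic
  have hSbdd : BddBelow S := ⟨t, fun x hx => hx.1.1⟩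
  have hcS : sInf S ∈ S := hS.csInf_mem ⟨q, ⟨⟨htq.le, le_rfl⟩, hq.le⟩⟩ hSbdd
  set c := sInf S
  have htc : t < c := hcS.1.1.lt_of_ne fun h => hcS.2.not_gt (h ▸ hφt)
  have hc0 : φ c = 0 := by
    obtain ⟨d, hd, hφd⟩ := intermediate_value_Icc' htc.le
      (hφ.mono (Icc_subset_Icc hpt.le hcS.1.2)) ⟨hcS.2, hφt.le⟩
    rwa [le_antisymm hd.2 (csInf_le hSbdd ⟨⟨hd.1, hd.2.trans hcS.1.2⟩, hφd.le⟩)] at hφd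
  refine ⟨c, ⟨hpt.trans htc, hcS.1.2.lt_of_ne fun h => hq.ne (h ▸ hc0)⟩, hc0, fun x hx => ?_⟩
  rcases le_or_gt x t with hxt | htx
  · exact ht ⟨hx.1, hxt⟩
  · exact lt_of_not_ge fun h => (csInf_le hSbdd ⟨⟨htx.le, hx.2.le.trans hcS.1.2⟩, h⟩).not_gt hx.2

lemma ContinuousOn.exists_last_zero {φ : ℝ → ℝ} {p q : ℝ} (hpq : p < q)
    (hφ : ContinuousOn φ (Icc p q)) (hq : ∀ᶠ x in 𝓝[<] q, 0 < φ x) (hp : φ p < 0) :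
    ∃ c ∈ Ioo p q, φ c = 0 ∧ ∀ x ∈ Ioo c q, 0 < φ x := by
  have hφ' : ContinuousOn (fun x => φ (-x)) (Icc (-q) (-p)) :=
    hφ.comp continuousOn_neg fun x hx => ⟨le_neg.1 hx.2, neg_le.1 hx.1⟩
  obtain ⟨c, hc, hc0, hpos⟩ := hφ'.exists_first_zero (neg_lt_neg hpq)
    (tendsto_neg_nhdsGT_neg.eventually hq) (by simpa using hp)
  refine ⟨-c, ⟨lt_neg.1 hc.2, neg_lt.1 hc.1⟩, hc0, fun x hx => ?_⟩
  simpa using hpos (-x) ⟨neg_lt_neg hx.2, neg_lt.1 hx.1⟩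

lemma HasDerivAt.eventually_nhdsGT_lt {f : ℝ → ℝ} {f' x : ℝ} (hf : HasDerivAt f f' x)
    (hf' : 0 < f') : ∀ᶠ y in 𝓝[>] x, f x < f y := by
  refine (((hasDerivAt_iff_tendsto_slope_left_right.1 hf).2.eventually
    (eventually_gt_nhds hf')).and self_mem_nhdsWithin).mono fun y hy => ?_
  exact (slope_pos_iff hy.2).1 hy.1

lemma HasDerivAt.eventually_nhdsLT_lt {f : ℝ → ℝ} {f' x : ℝ} (hf : HasDerivAt f f' x)
    (hf' : 0 < f') : ∀ᶠ y in 𝓝[<] x, f y < f x := by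
  refine (((hasDerivAt_iff_tendsto_slope_left_right.1 hf).1.eventually
    (eventually_gt_nhds hf')).and self_mem_nhdsWithin).mono fun y hy => ?_
  exact (slope_pos_iff_gt hy.2).1 hy.1

lemma HasDerivAt.eq_of_eventuallyEq_nhdsWithin {𝕜 E : Type*} [NontriviallyNormedField 𝕜]
    [NormedAddCommGroup E] [NormedSpace 𝕜 E] {φ ψ : 𝕜 → E} {s : Set 𝕜} {x : 𝕜} {d e : E}
    (hφ : HasDerivAt φ d x) (hψ : HasDerivWithinAt ψ e s x) (hs : UniqueDiffWithinAt 𝕜 s x)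
    (hφψ : φ =ᶠ[𝓝[s] x] ψ) : d = e := by
  have := mem_closure_iff_nhdsWithin_neBot.1 hs.mem_closure
  have hx : φ x = ψ x := tendsto_nhds_unique
    (hφ.continuousAt.continuousWithinAt.tendsto.congr' hφψ) hψ.continuousWithinAt.tendsto
  exact hs.eq_deriv s (hφ.hasDerivWithinAt.congr_of_eventuallyEq hφψ.symm hx.symm) hψ

lemma strictConvexOn_of_hasDerivAt2_pos {D : Set ℝ} (hD : Convex ℝ D) {f f' f'' : ℝ → ℝ}
    (hf : ContinuousOn f D) (hf' : ∀ x ∈ interior D, HasDerivAt f (f' x) x)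
    (hf'' : ∀ x ∈ interior D, HasDerivAt f' (f'' x) x) (hf''₀ : ∀ x ∈ interior D, 0 < f'' x) :
    StrictConvexOn ℝ D f := by
  have hmono : StrictMonoOn f' (interior D) :=
    strictMonoOn_of_deriv_pos hD.interior (fun x hx => (hf'' x hx).continuousAt.continuousWithinAt)
      fun x hx => (hf'' x (interior_subset hx)).deriv ▸ hf''₀ x (interior_subset hx)
  exact (hmono.congr fun x hx => (hf' x hx).deriv.symm).strictConvexOn_of_deriv hD hf

lemma strictConcaveOn_of_hasDerivAt2_neg {D : Set ℝ} (hD : Convex ℝ D) {f f' f'' : ℝ → ℝ}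
    (hf : ContinuousOn f D) (hf' : ∀ x ∈ interior D, HasDerivAt f (f' x) x)
    (hf'' : ∀ x ∈ interior D, HasDerivAt f' (f'' x) x) (hf''₀ : ∀ x ∈ interior D, f'' x < 0) :
    StrictConcaveOn ℝ D f := by
  simpa using (strictConvexOn_of_hasDerivAt2_pos hD hf.neg (f' := fun x => -f' x)
    (f'' := fun x => -f'' x) (fun x hx => (hf' x hx).neg) (fun x hx => (hf'' x hx).neg)
    fun x hx => neg_pos.2 (hf''₀ x hx)).neg

lemma strictConvexOn_Icc_and_lt_of_deriv2_pos {p q : ℝ} {f f' f'' : ℝ → ℝ} (hpq : p < q)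
    (hf : ContinuousOn f (Icc p q)) (hf' : ∀ x ∈ Ico p q, HasDerivAt f (f' x) x)
    (hf'' : ∀ x ∈ Ioo p q, HasDerivAt f' (f'' x) x) (hf''₀ : ∀ x ∈ Ioo p q, 0 < f'' x)
    (hf'p : f' p = 0) : StrictConvexOn ℝ (Icc p q) f ∧ f p < f q := by
  have hconv : StrictConvexOn ℝ (Icc p q) f := by
    refine strictConvexOn_of_hasDerivAt2_pos (f' := f') (f'' := f'') (convex_Icc p q) hf
      ?_ ?_ ?_ <;> simp only [interior_Icc]
    exacts [fun x hx => hf' x (Ioo_subset_Ico_self hx), hf'', hf''₀]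
  refine ⟨hconv, (slope_pos_iff hpq).1 ?_⟩
  simpa [hf'p] using hconv.lt_slope_of_hasDerivAt (left_mem_Icc.2 hpq.le)
    (right_mem_Icc.2 hpq.le) hpq (hf' p (left_mem_Ico.2 hpq))

lemma strictConcaveOn_Icc_and_lt_of_deriv2_neg {p q : ℝ} {f f' f'' : ℝ → ℝ} (hpq : p < q)
    (hf : ContinuousOn f (Icc p q)) (hf' : ∀ x ∈ Ioc p q, HasDerivAt f (f' x) x)
    (hf'' : ∀ x ∈ Ioo p q, HasDerivAt f' (f'' x) x) (hf''₀ : ∀ x ∈ Ioo p q, f'' x < 0)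
    (hf'q : f' q = 0) : StrictConcaveOn ℝ (Icc p q) f ∧ f p < f q := by
  have hconc : StrictConcaveOn ℝ (Icc p q) f := by
    refine strictConcaveOn_of_hasDerivAt2_neg (f' := f') (f'' := f'') (convex_Icc p q) hf
      ?_ ?_ ?_ <;> simp only [interior_Icc]
    exacts [fun x hx => hf' x (Ioo_subset_Ioc_self hx), hf'', hf''₀]
  refine ⟨hconc, (slope_pos_iff hpq).1 ?_⟩
  simpa [hf'q] using hconc.lt_slope_of_hasDerivAt (left_mem_Icc.2 hpq.le)
    (right_mem_Icc.2 hpq.le) hpq (hf' q (right_mem_Ioc.2 hpq))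

lemma hasDerivAt_cubic (l x : ℝ) :
    HasDerivAt (fun x => l * (x ^ 3 + x)) (l * (3 * x ^ 2 + 1)) x := by
  simpa using ((hasDerivAt_pow 3 x).add (hasDerivAt_id x)).const_mul l

lemma hasDerivAt_cubic_deriv (l x : ℝ) :
    HasDerivAt (fun x => l * (3 * x ^ 2 + 1)) (l * (6 * x)) x :=
  ((((hasDerivAt_pow 2 x).const_mul 3).add_const 1).const_mul l).congr_deriv (by push_cast; ring)

lemma convexOn_cubic {l : ℝ} (hl : 0 ≤ l) : ConvexOn ℝ (Ici 0) fun x => l * (x ^ 3 + x) :=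
  convexOn_of_hasDerivWithinAt2_nonneg (convex_Ici 0)
    (fun x _ => (hasDerivAt_cubic l x).continuousAt.continuousWithinAt)
    (fun x _ => (hasDerivAt_cubic l x).hasDerivWithinAt)
    (fun x _ => (hasDerivAt_cubic_deriv l x).hasDerivWithinAt)
    fun x hx => mul_nonneg hl (by rw [interior_Ici] at hx; linarith [hx.out])

lemma concaveOn_cubic {l : ℝ} (hl : 0 ≤ l) : ConcaveOn ℝ (Iic 0) fun x => l * (x ^ 3 + x) :=
  concaveOn_of_hasDerivWithinAt2_nonpos (convex_Iic 0)
    (fun x _ => (hasDerivAt_cubic l x).continuousAt.continuousWithinAt)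
    (fun x _ => (hasDerivAt_cubic l x).hasDerivWithinAt)
    (fun x _ => (hasDerivAt_cubic_deriv l x).hasDerivWithinAt)
    fun x hx => mul_nonpos_of_nonneg_of_nonpos hl (by rw [interior_Iic] at hx; linarith [hx.out])

lemma exists_first_crossing_convexOn_ite {f g : ℝ → ℝ} {p q : ℝ} (hpq : p < q)
    (hf : ConvexOn ℝ (Icc p q) f) (hfc : ContinuousOn f (Icc p q))
    (hg : ConvexOn ℝ (Icc p q) g) (hgc : ContinuousOn g (Icc p q)) (hp : f p = g p)
    (hpg : ∀ᶠ x in 𝓝[>] p, f x < g x) (hq : g q < f q) :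
    ∃ c ∈ Ioo p q, (∀ x ∈ Ioo p c, f x < g x) ∧ g c = f c ∧
      ConvexOn ℝ (Icc p q) fun x => if x ≤ c then g x else f x := by
  obtain ⟨c, hc, hc0, hlt⟩ := (hgc.sub hfc).exists_first_zero hpq
    (hpg.mono fun x hx => sub_pos.2 hx) (sub_neg.2 hq)
  have hgfc : g c = f c := sub_eq_zero.1 hc0
  have hle : ∀ x ∈ Icc p q, x ≤ c → f x ≤ g x := fun x hx hxc => by
    rcases hx.1.eq_or_lt with rfl | hpx
    · exact hp.le
    rcases hxc.eq_or_lt with rfl | hxc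
    · exact hgfc.ge
    exact (sub_pos.1 (hlt x ⟨hpx, hxc⟩)).le
  refine ⟨c, hc, fun x hx => sub_pos.1 (hlt x hx), hgfc, ?_⟩
  refine convexOn_of_inter_Iic_of_inter_Ici (c := c)
    ((hg.subset inter_subset_left ((convex_Icc p q).inter (convex_Iic c))).congr
      fun x hx => (if_pos hx.2).symm)
    ((hf.subset inter_subset_left ((convex_Icc p q).inter (convex_Ici c))).congr
      fun x hx => ?_) hf (fun x hx => ?_) (by simp [hgfc])
  · rcases (mem_Ici.1 hx.2).eq_or_lt with rfl | hcx
    · simp [hgfc]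
    · simp [not_le.2 hcx]
  · split_ifs with hxc
    exacts [hle x hx hxc, le_rfl]

lemma exists_last_crossing_concaveOn_ite {f g : ℝ → ℝ} {p q : ℝ} (hpq : p < q)
    (hf : ConcaveOn ℝ (Icc p q) f) (hfc : ContinuousOn f (Icc p q))
    (hg : ConcaveOn ℝ (Icc p q) g) (hgc : ContinuousOn g (Icc p q)) (hq : f q = g q)
    (hgq : ∀ᶠ x in 𝓝[<] q, g x < f x) (hp : f p < g p) :
    ∃ c ∈ Ioo p q, (∀ x ∈ Ioo c q, g x < f x) ∧ g c = f c ∧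
      ConcaveOn ℝ (Icc p q) fun x => if c ≤ x then g x else f x := by
  obtain ⟨c, hc, hc0, hlt⟩ := (hfc.sub hgc).exists_last_zero hpq
    (hgq.mono fun x hx => sub_pos.2 hx) (sub_neg.2 hp)
  have hgfc : g c = f c := (sub_eq_zero.1 hc0).symm
  have hle : ∀ x ∈ Icc p q, c ≤ x → g x ≤ f x := fun x hx hcx => by
    rcases hx.2.eq_or_lt with rfl | hxq
    · exact hq.ge
    rcases hcx.eq_or_lt with rfl | hcx
    · exact hgfc.le
    exact (sub_pos.1 (hlt x ⟨hcx, hxq⟩)).le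
  refine ⟨c, hc, fun x hx => sub_pos.1 (hlt x hx), hgfc, ?_⟩
  refine concaveOn_of_inter_Iic_of_inter_Ici (c := c)
    ((hf.subset inter_subset_left ((convex_Icc p q).inter (convex_Iic c))).congr
      fun x hx => ?_)
    ((hg.subset inter_subset_left ((convex_Icc p q).inter (convex_Ici c))).congr
      fun x hx => (if_pos hx.2).symm) hf (fun x hx => ?_) (by simp [hgfc])
  · rcases (mem_Iic.1 hx.2).eq_or_lt with rfl | hxc
    · simp [hgfc]
    · simp [not_le.2 hxc]
  · split_ifs with hcx
    exacts [hle x hx hcx, le_rfl]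

lemma HasDerivAt.eq_of_eqOn_Ioo_right {F h h' : ℝ → ℝ} {x p d e : ℝ}
    (hF : HasDerivAt (_root_.deriv F) d x) (hxp : x < p) (hFh : EqOn F h (Ioo x p))
    (hh : ∀ y ∈ Ioo x p, HasDerivAt h (h' y) y) (hh' : HasDerivWithinAt h' e (Ioi x) x) :
    d = e :=
  hF.eq_of_eventuallyEq_nhdsWithin hh' (uniqueDiffWithinAt_Ioi x) <|
    eventuallyEq_of_mem (Ioo_mem_nhdsGT hxp) <| deriv_eqOn isOpen_Ioo fun y hy =>
      (hh y hy).hasDerivWithinAt.congr hFh (hFh hy)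

lemma HasDerivAt.eq_of_eqOn_Ioo_left {F h h' : ℝ → ℝ} {x p d e : ℝ}
    (hF : HasDerivAt (_root_.deriv F) d x) (hpx : p < x) (hFh : EqOn F h (Ioo p x))
    (hh : ∀ y ∈ Ioo p x, HasDerivAt h (h' y) y) (hh' : HasDerivWithinAt h' e (Iio x) x) :
    d = e :=
  hF.eq_of_eventuallyEq_nhdsWithin hh' (uniqueDiffWithinAt_Iio x) <|
    eventuallyEq_of_mem (Ioo_mem_nhdsLT hpx) <| deriv_eqOn isOpen_Ioo fun y hy =>
      (hh y hy).hasDerivWithinAt.congr hFh (hFh hy)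

lemma eq_zero_of_hasDerivAt_deriv_piecewise {a b a' b' : ℝ} {f f' f'' g g' g'' : ℝ → ℝ}
    (haa' : a < a') (ha' : a' < 0) (hb' : 0 < b') (hb'b : b' < b)
    (hf' : ∀ x ∈ Ioo a b, HasDerivAt f (f' x) x)
    (hf'' : ∀ x ∈ Icc a b, HasDerivWithinAt f' (f'' x) (Icc a b) x)
    (hg' : ∀ x, HasDerivAt g (g' x) x) (hg'' : ∀ x, HasDerivAt g' (g'' x) x)
    (hf''₀ : ∀ x ∈ Icc a b, x ≠ 0 → f'' x ≠ 0) (hg''₀ : ∀ x ≠ 0, g'' x ≠ 0) {x : ℝ}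
    (hx : x ∈ Icc a b) (hF : HasDerivAt (deriv ((Icc a' b').piecewise g f)) 0 x) : x = 0 := by
  by_contra hx0
  rcases lt_or_gt_of_ne hx0 with hx0' | hx0'
  · rcases lt_or_ge x a' with hxa' | hxa'
    · refine hf''₀ x hx hx0 (hF.eq_of_eqOn_Ioo_right hxa'
        (fun y hy => piecewise_eq_of_notMem _ _ _ fun h => hy.2.not_ge h.1)
        (fun y hy => hf' y ⟨hx.1.trans_lt hy.1, by linarith [hy.2]⟩)
        ((hf'' x hx).mono_of_mem_nhdsWithin (Icc_mem_nhdsGT_of_mem ⟨hx.1, by linarith⟩))).symm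
    · refine hg''₀ x hx0 (hF.eq_of_eqOn_Ioo_right hx0'
        (fun y hy => piecewise_eq_of_mem _ _ _ ⟨hxa'.trans hy.1.le, by linarith [hy.2]⟩)
        (fun y _ => hg' y) (hg'' x).hasDerivWithinAt).symm
  · rcases lt_or_ge b' x with hb'x | hxb'
    · refine hf''₀ x hx hx0 (hF.eq_of_eqOn_Ioo_left hb'x
        (fun y hy => piecewise_eq_of_notMem _ _ _ fun h => hy.1.not_ge h.2)
        (fun y hy => hf' y ⟨by linarith [hy.1], hy.2.trans_le hx.2⟩)
        ((hf'' x hx).mono_of_mem_nhdsWithin (Icc_mem_nhdsLT_of_mem ⟨by linarith, hx.2⟩))).symm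
    · refine hg''₀ x hx0 (hF.eq_of_eqOn_Ioo_left hx0'
        (fun y hy => piecewise_eq_of_mem _ _ _ ⟨by linarith [hy.1], hy.2.le.trans hxb'⟩)
        (fun y _ => hg' y) (hg'' x).hasDerivWithinAt).symm

lemma exists_cubic_gluing {a b l : ℝ} {f f' f'' : ℝ → ℝ} (ha : a < 0) (hb : 0 < b) (hl : 0 < l)
    (hf : ContinuousOn f (Icc a b)) (hf' : ∀ x ∈ Ioo a b, HasDerivAt f (f' x) x)
    (hf'' : ∀ x ∈ Icc a b, HasDerivWithinAt f' (f'' x) (Icc a b) x)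
    (hf''₀ : ∀ x ∈ Icc a b, x ≠ 0 → f'' x ≠ 0) (hf0 : f 0 = 0) (hf'0 : f' 0 = 0)
    (hconv : ConvexOn ℝ (Icc 0 b) f) (hconc : ConcaveOn ℝ (Icc a 0) f)
    (hgb : l * (b ^ 3 + b) < f b) (hga : f a < l * (a ^ 3 + a)) :
    ∃ a' b' : ℝ, a < a' ∧ a' < 0 ∧ 0 < b' ∧ b' < b ∧
      (∀ x ∈ Ioo 0 b', f x < l * (x ^ 3 + x)) ∧ l * (b' ^ 3 + b') = f b' ∧
      (∀ x ∈ Ioo a' 0, l * (x ^ 3 + x) < f x) ∧ l * (a' ^ 3 + a') = f a' ∧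
      ∃ F : ℝ → ℝ, (∀ x, F x = if a' ≤ x ∧ x ≤ b' then l * (x ^ 3 + x) else f x) ∧
        ConvexOn ℝ (Icc 0 b) F ∧ ConcaveOn ℝ (Icc a 0) F ∧
        (∀ x ∈ Icc a b, HasDerivAt (deriv F) 0 x → x = 0) := by
  have hgc : Continuous fun x => l * (x ^ 3 + x) := by fun_prop
  have hgf : HasDerivAt (fun x => l * (x ^ 3 + x) - f x) l 0 :=
    ((hasDerivAt_cubic l 0).sub ((hf' 0 ⟨ha, hb⟩).congr_deriv hf'0)).congr_deriv (by simp)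
  obtain ⟨b', hb', hltb', hb'eq, hFconv⟩ := exists_first_crossing_convexOn_ite hb hconv
    (hf.mono (Icc_subset_Icc_left ha.le))
    ((convexOn_cubic hl.le).subset Icc_subset_Ici_self (convex_Icc 0 b)) hgc.continuousOn
    (by simp [hf0]) ((hgf.eventually_nhdsGT_lt hl).mono fun x hx => by simpa [hf0] using hx) hgb
  obtain ⟨a', ha', hlta', ha'eq, hFconc⟩ := exists_last_crossing_concaveOn_ite ha hconc
    (hf.mono (Icc_subset_Icc_right hb.le))
    ((concaveOn_cubic hl.le).subset Icc_subset_Iic_self (convex_Icc a 0)) hgc.continuousOn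
    (by simp [hf0]) ((hgf.eventually_nhdsLT_lt hl).mono fun x hx => by simpa [hf0] using hx) hga
  refine ⟨a', b', ha'.1, ha'.2, hb'.1, hb'.2, hltb', hb'eq, hlta', ha'eq,
    (Icc a' b').piecewise (fun x => l * (x ^ 3 + x)) f, fun x => rfl,
    hFconv.congr fun x hx => ?_, hFconc.congr fun x hx => ?_,
    fun x hx hF => eq_zero_of_hasDerivAt_deriv_piecewise ha'.1 ha'.2 hb'.1 hb'.2 hf' hf''
      (hasDerivAt_cubic l) (hasDerivAt_cubic_deriv l) hf''₀ (fun x hx0 => by positivity) hx hF⟩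
  · simp [piecewise, ha'.2.le.trans hx.1]
  · simp [piecewise, hx.2.trans hb'.1.le]

theorem stmt_8_general (a b : ℝ) (ha : a < 0) (hb : 0 < b) (f f' f'' : ℝ → ℝ)
    (hd1 : ∀ x ∈ Set.Icc a b, HasDerivWithinAt f (f' x) (Set.Icc a b) x)
    (hd2 : ∀ x ∈ Set.Icc a b, HasDerivWithinAt f' (f'' x) (Set.Icc a b) x)
    (hf0 : f 0 = 0) (hf'0 : f' 0 = 0)
    (hpos : ∀ x ∈ Set.Ioc 0 b, 0 < f'' x)
    (hneg : ∀ x ∈ Set.Ico a 0, f'' x < 0) :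
    ∃ lam0 > (0 : ℝ), ∀ l : ℝ, 0 < l → l < lam0 →
      l * (b ^ 3 + b) < f b ∧
      f a < l * (a ^ 3 + a) ∧
      ∃ a' b' : ℝ, a < a' ∧ a' < 0 ∧ 0 < b' ∧ b' < b ∧
        (∀ x ∈ Set.Ioo 0 b', f x < l * (x ^ 3 + x)) ∧
        l * (b' ^ 3 + b') = f b' ∧
        (∀ x ∈ Set.Ioo a' 0, l * (x ^ 3 + x) < f x) ∧
        l * (a' ^ 3 + a') = f a' ∧
        ∃ F : ℝ → ℝ,
          (∀ x, F x = if a' ≤ x ∧ x ≤ b' then l * (x ^ 3 + x) else f x) ∧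
          ConvexOn ℝ (Set.Icc 0 b) F ∧
          ConcaveOn ℝ (Set.Icc a 0) F ∧
          (∀ x ∈ Set.Icc a b, HasDerivAt (deriv F) 0 x → x = 0) := by
  have hD1 : ∀ x ∈ Ioo a b, HasDerivAt f (f' x) x := fun x hx =>
    (hd1 x (Ioo_subset_Icc_self hx)).hasDerivAt (Icc_mem_nhds hx.1 hx.2)
  have hD2 : ∀ x ∈ Ioo a b, HasDerivAt f' (f'' x) x := fun x hx =>
    (hd2 x (Ioo_subset_Icc_self hx)).hasDerivAt (Icc_mem_nhds hx.1 hx.2)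
  have hfc : ContinuousOn f (Icc a b) := fun x hx => (hd1 x hx).continuousWithinAt
  obtain ⟨hconv, hfb⟩ := strictConvexOn_Icc_and_lt_of_deriv2_pos hb
    (hfc.mono (Icc_subset_Icc_left ha.le)) (fun x hx => hD1 x ⟨ha.trans_le hx.1, hx.2⟩)
    (fun x hx => hD2 x ⟨ha.trans hx.1, hx.2⟩) (fun x hx => hpos x (Ioo_subset_Ioc_self hx)) hf'0
  obtain ⟨hconc, hfa⟩ := strictConcaveOn_Icc_and_lt_of_deriv2_neg ha
    (hfc.mono (Icc_subset_Icc_right hb.le)) (fun x hx => hD1 x ⟨hx.1, hx.2.trans_lt hb⟩)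
    (fun x hx => hD2 x ⟨hx.1, hx.2.trans hb⟩) (fun x hx => hneg x (Ioo_subset_Ico_self hx)) hf'0
  rw [hf0] at hfb hfa
  have hbb : 0 < b ^ 3 + b := by positivity
  have haa : a ^ 3 + a < 0 := by nlinarith [sq_nonneg a]
  refine ⟨min (f b / (b ^ 3 + b)) (f a / (a ^ 3 + a)),
    lt_min (div_pos hfb hbb) (div_pos_of_neg_of_neg hfa haa), fun l hl hll => ?_⟩
  have hgb : l * (b ^ 3 + b) < f b := (lt_div_iff₀ hbb).1 (hll.trans_le (min_le_left _ _))
  have hga : f a < l * (a ^ 3 + a) := (lt_div_iff_of_neg haa).1 (hll.trans_le (min_le_right _ _))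
  refine ⟨hgb, hga, exists_cubic_gluing ha hb hl hfc hD1 hd2 (fun x hx hx0 => ?_) hf0 hf'0
    hconv.convexOn hconc.concaveOn hgb hga⟩
  rcases hx0.lt_or_gt with h | h
  exacts [(hneg x ⟨hx.1, h⟩).ne, (hpos x ⟨h, hx.2⟩).ne']

/-- (The cubic comparison construction of Lemma 5.8.) Let `f : [a,b] → ℝ`
(`a < 0 < b`) be `C²` with `f(0) = f'(0) = 0`, `f'' > 0` on `(0,b]` and `f'' < 0` on `[a,0)`,
and let `g(x) = λ(x³ + x)`.  For all sufficiently small `λ > 0`: `g(b) < f(b)`, `g(a) > f(a)`,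
there are maximal intervals `(0,b')` and `(a',0)` on which `g > f` resp. `g < f` (with
`a < a' < 0 < b' < b` and `g = f` at `a'`, `b'`), and the function `F` equal to `g` on
`[a',b']` and to `f` elsewhere is convex on `[0,b]`, concave on `[a,0]`, with `F''`
vanishing only at `0` where defined. -/
theorem stmt_8 (a b : ℝ) (ha : a < 0) (hb : 0 < b) (f f' f'' : ℝ → ℝ)
    (hd1 : ∀ x ∈ Set.Icc a b, HasDerivWithinAt f (f' x) (Set.Icc a b) x)
    (hd2 : ∀ x ∈ Set.Icc a b, HasDerivWithinAt f' (f'' x) (Set.Icc a b) x)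
    (hf''c : ContinuousOn f'' (Set.Icc a b))
    (hf0 : f 0 = 0) (hf'0 : f' 0 = 0)
    (hpos : ∀ x ∈ Set.Ioc 0 b, 0 < f'' x)
    (hneg : ∀ x ∈ Set.Ico a 0, f'' x < 0) :
    ∃ lam0 > (0 : ℝ), ∀ l : ℝ, 0 < l → l < lam0 →
      l * (b ^ 3 + b) < f b ∧
      f a < l * (a ^ 3 + a) ∧
      ∃ a' b' : ℝ, a < a' ∧ a' < 0 ∧ 0 < b' ∧ b' < b ∧
        (∀ x ∈ Set.Ioo 0 b', f x < l * (x ^ 3 + x)) ∧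
        l * (b' ^ 3 + b') = f b' ∧
        (∀ x ∈ Set.Ioo a' 0, l * (x ^ 3 + x) < f x) ∧
        l * (a' ^ 3 + a') = f a' ∧
        ∃ F : ℝ → ℝ,
          (∀ x, F x = if a' ≤ x ∧ x ≤ b' then l * (x ^ 3 + x) else f x) ∧
          ConvexOn ℝ (Set.Icc 0 b) F ∧
          ConcaveOn ℝ (Set.Icc a 0) F ∧
          (∀ x ∈ Set.Icc a b, HasDerivAt (deriv F) 0 x → x = 0) :=
  stmt_8_general a b ha hb f f' f'' hd1 hd2 hf0 hf'0 hpos hneg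
end

section
/- Let Γ be a simple closed curve on S^2 that is spherically convex (bounds a convex region) and contains a pair of antipodal points. Then Γ bounds a lune; in particular Γ contains two geodesic (great circle) subarcs. -/
/-- Dot product on `ℝ³`. -/
def dot3 (u v : Fin 3 → ℝ) : ℝ := u 0 * v 0 + u 1 * v 1 + u 2 * v 2

/-- The unit sphere `S²` in `ℝ³`. -/
def unitSphere2 : Set (Fin 3 → ℝ) := {x | dot3 x x = 1}

/-- A subset `X ⊆ S²` is spherically convex if every two points of `X` can be joined by a
geodesic arc (arc of a great circle) of length at most `π` contained in `X`. -/
def SphConvex (X : Set (Fin 3 → ℝ)) : Prop :=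
  ∀ x ∈ X, ∀ y ∈ X, ∃ u : Fin 3 → ℝ, ∃ L : ℝ,
    dot3 u u = 1 ∧ dot3 x u = 0 ∧ 0 ≤ L ∧ L ≤ Real.pi ∧
    y = Real.cos L • x + Real.sin L • u ∧
    ∀ α ∈ Set.Icc (0 : ℝ) L, Real.cos α • x + Real.sin α • u ∈ X

/-- The half great circle with endpoints `p` and `-p` passing through the direction `q`. -/
def halfGreatCircle (p q : Fin 3 → ℝ) : Set (Fin 3 → ℝ) :=
  {x | ∃ α ∈ Set.Icc (0 : ℝ) Real.pi, x = Real.cos α • p + Real.sin α • q}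

/-!
Since `±p ∈ X`, convexity makes every point `x ≠ ±p` of `X` carry the whole half great circle
from `p` through `x` to `-p`. In a frame `p, u, v` the set `X` is therefore the union of the half
great circles from `p` in the directions `cos θ • u + sin θ • v` for `θ` in a set `A ⊆ ℝ` that is
closed, `2π`-periodic and contains the interval between any two of its points at distance `< π`.
Because `p` lies on the boundary, `A ≠ ℝ`, and because `X` has interior points, `A` has interior
points; such a set is, modulo `2π`, a single interval `[a, b]` with `0 < b - a ≤ π`. Hence `X` is
the lune between the longitudes `a` and `b`, bounded by the half great circles at `a` and `b`.
-/

open Real Set Matrix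

lemma dot3_comm (x y : Fin 3 → ℝ) : dot3 x y = dot3 y x := by
  simp only [dot3]; ring

lemma dot3_eq_dotProduct (x y : Fin 3 → ℝ) : dot3 x y = x ⬝ᵥ y := by
  simp [dot3, dotProduct, Fin.sum_univ_three]

lemma dot3_sub_sub (x y : Fin 3 → ℝ) :
    dot3 (x - y) (x - y) = dot3 x x - 2 * dot3 x y + dot3 y y := by
  simp only [dot3, Pi.sub_apply]; ring

lemma dot3_add_smul_right (x y z w : Fin 3 → ℝ) (a b c : ℝ) :
    dot3 x (a • y + b • z + c • w) = a * dot3 x y + b * dot3 x z + c * dot3 x w := by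
  simp only [dot3, Pi.add_apply, Pi.smul_apply, smul_eq_mul]; ring

lemma dot3_cross_smul_cross (p u y : Fin 3 → ℝ) :
    dot3 y (p ⨯₃ u) • (p ⨯₃ u) =
      (dot3 p p * dot3 u u - dot3 p u ^ 2) • y - (dot3 u u * dot3 y p) • p
        - (dot3 p p * dot3 y u) • u + (dot3 p u) • (dot3 y u • p + dot3 y p • u) := by
  ext i
  fin_cases i <;> simp [dot3, cross_apply] <;> ring

lemma exists_eq_sqrt_mul_cos_and_eq_sqrt_mul_sin (a b : ℝ) :
    ∃ θ, a = √(a ^ 2 + b ^ 2) * cos θ ∧ b = √(a ^ 2 + b ^ 2) * sin θ := by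
  have hnorm : ‖(⟨a, b⟩ : ℂ)‖ = √(a ^ 2 + b ^ 2) := Complex.norm_eq_sqrt_sq_add_sq _
  refine ⟨Complex.arg ⟨a, b⟩, ?_, ?_⟩
  · simpa [hnorm] using (Complex.norm_mul_cos_arg ⟨a, b⟩).symm
  · simpa [hnorm] using (Complex.norm_mul_sin_arg ⟨a, b⟩).symm

lemma sin_sub_nonneg_and_sin_sub_nonneg_iff {a b t : ℝ} (hab : a < b) (hba : b ≤ a + π)
    (ht : t ∈ Ico a (a + 2 * π)) : 0 ≤ sin (t - a) ∧ 0 ≤ sin (b - t) ↔ t ≤ b := by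
  refine ⟨fun ⟨h1, h2⟩ ↦ ?_, fun htb ↦ ⟨sin_nonneg_of_nonneg_of_le_pi (by linarith [ht.1])
    (by linarith), sin_nonneg_of_nonneg_of_le_pi (by linarith) (by linarith [ht.1])⟩⟩
  by_contra! hbt
  rcases le_or_gt (t - a) π with h | h
  · exact h2.not_gt (sin_neg_of_neg_of_neg_pi_lt (by linarith) (by linarith))
  · have := sin_pos_of_pos_of_lt_pi (x := t - a - π) (by linarith) (by linarith [ht.2])
    rw [sin_sub_pi] at this
    linarith

/-- A subset of `ℝ` is arc-convex if it contains every interval of length `< π` between two of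
its points. -/
lemma Function.Periodic.apply_toIcoMod {α : Type*} {f : ℝ → α} {T : ℝ}
    (hf : Function.Periodic f T) (hT : 0 < T) (c θ : ℝ) : f (toIcoMod hT c θ) = f θ := by
  rw [← self_sub_toIcoDiv_zsmul, hf.sub_zsmul_eq]

def ArcConvex (A : Set ℝ) : Prop := ∀ s ∈ A, ∀ t ∈ A, s ≤ t → t - s < π → Icc s t ⊆ A

section ArcConvex

variable {A : Set ℝ}

lemma ArcConvex.mem_iff_toIcoMod_le (hA : ArcConvex A) (hper : Function.Periodic (· ∈ A) (2 * π))
    {ψ m M θ₀ : ℝ} (hψ : ψ ∉ A) (hm : IsLeast (A ∩ Icc ψ (ψ + 2 * π)) m)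
    (hM : IsGreatest (A ∩ Icc ψ (ψ + 2 * π)) M) (hθ₀ : θ₀ ∈ A) (hmθ₀ : m < θ₀) (hθ₀M : θ₀ < M) :
    M ≤ m + π ∧ ∀ θ, θ ∈ A ↔ toIcoMod two_pi_pos m θ ≤ M := by
  have hper' : ∀ θ, θ + 2 * π ∈ A ↔ θ ∈ A := fun θ ↦ Iff.of_eq (hper θ)
  obtain ⟨⟨hmA, hψm, -⟩, hm_le⟩ := hm
  obtain ⟨⟨hMA, -, hMψ⟩, hle_M⟩ := hM
  have hMm : M ≤ m + π := by
    by_contra! h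
    exact (hper' ψ).not.2 hψ (hA M hMA _ ((hper' m).2 hmA) (by linarith) (by linarith)
      ⟨hMψ, by linarith⟩)
  have hIcc : Icc m M ⊆ A := by
    intro θ hθ
    rcases le_total θ θ₀ with h | h
    · exact hA m hmA θ₀ hθ₀ hmθ₀.le (by linarith) ⟨hθ.1, h⟩
    · exact hA θ₀ hθ₀ M hMA hθ₀M.le (by linarith) ⟨h, hθ.2⟩
  refine ⟨hMm, fun θ ↦ ?_⟩
  have ht := toIcoMod_mem_Ico two_pi_pos m θ
  rw [← Iff.of_eq (hper.apply_toIcoMod two_pi_pos m θ)]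
  generalize toIcoMod two_pi_pos m θ = t at ht ⊢
  refine ⟨fun htA ↦ ?_, fun htM ↦ hIcc ⟨ht.1, htM⟩⟩
  rcases le_or_gt t (ψ + 2 * π) with h | h
  · exact hle_M ⟨htA, by linarith [ht.1], h⟩
  · -- otherwise `t - 2π` would lie in the window below `m`
    have := hm_le ⟨(hper' _).1 (by rwa [sub_add_cancel]), by linarith, by linarith [ht.2]⟩
    linarith [ht.2]

theorem ArcConvex.exists_mem_iff_toIcoMod_le (hA : ArcConvex A) (hcl : IsClosed A)
    (hper : Function.Periodic (· ∈ A) (2 * π)) (hne : A ≠ univ) (hint : (interior A).Nonempty) :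
    ∃ a b, a < b ∧ b ≤ a + π ∧ ∀ θ, θ ∈ A ↔ toIcoMod two_pi_pos a θ ≤ b := by
  obtain ⟨θ₀, hθ₀⟩ := hint
  obtain ⟨ψ₀, hψ₀⟩ := (ne_univ_iff_exists_notMem A).1 hne
  -- a window `[ψ, ψ + 2π]` around `θ₀` whose ends are not in `A`
  set ψ := toIcoMod two_pi_pos (θ₀ - 2 * π) ψ₀
  have hψ : ψ ∉ A := fun h ↦ hψ₀ ((hper.apply_toIcoMod two_pi_pos _ _).mp h)
  have hψθ₀ : θ₀ ∈ Ioo ψ (ψ + 2 * π) := by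
    have := toIcoMod_mem_Ico two_pi_pos (θ₀ - 2 * π) ψ₀
    refine ⟨by linarith [this.2], lt_of_le_of_ne (by linarith [this.1]) fun h ↦ hψ ?_⟩
    exact (hper ψ).mp (by rw [← h]; exact interior_subset hθ₀)
  obtain ⟨ε, hε, hball⟩ :=
    Metric.mem_nhds_iff.1 ((isOpen_interior.inter isOpen_Ioo).mem_nhds ⟨hθ₀, hψθ₀⟩)
  rw [Real.ball_eq_Ioo] at hball
  have hB : ∀ θ ∈ Ioo (θ₀ - ε) (θ₀ + ε), θ ∈ A ∩ Icc ψ (ψ + 2 * π) := fun θ hθ ↦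
    ⟨interior_subset (hball hθ).1, Ioo_subset_Icc_self (hball hθ).2⟩
  have hK : IsCompact (A ∩ Icc ψ (ψ + 2 * π)) := isCompact_Icc.inter_left hcl
  have hB_ne : (A ∩ Icc ψ (ψ + 2 * π)).Nonempty := ⟨θ₀, hB θ₀ ⟨by linarith, by linarith⟩⟩
  obtain ⟨m, hm⟩ := hK.exists_isLeast hB_ne
  obtain ⟨M, hM⟩ := hK.exists_isGreatest hB_ne
  have hmθ₀ : m < θ₀ := (hm.2 (hB (θ₀ - ε / 2) ⟨by linarith, by linarith⟩)).trans_lt (by linarith)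
  have hθ₀M : θ₀ < M :=
    (by linarith : θ₀ < θ₀ + ε / 2).trans_le (hM.2 (hB _ ⟨by linarith, by linarith⟩))
  obtain ⟨hMm, hiff⟩ := hA.mem_iff_toIcoMod_le hper hψ hm hM (interior_subset hθ₀) hmθ₀ hθ₀M
  exact ⟨m, M, hmθ₀.trans hθ₀M, hMm, hiff⟩

lemma mem_closure_compl_of_forall_mem_iff {a b : ℝ} (hab : a < b) (hba : b ≤ a + π)
    (hA : ∀ θ, θ ∈ A ↔ toIcoMod two_pi_pos a θ ≤ b) :
    a ∈ A ∧ a ∈ closure Aᶜ ∧ b ∈ A ∧ b ∈ closure Aᶜ := by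
  have hA' : ∀ θ ∈ Ico a (a + 2 * π), θ ∈ A ↔ θ ≤ b := fun θ hθ ↦ by
    rw [hA, (toIcoMod_eq_self two_pi_pos).2 hθ]
  have hright : Ioo b (a + 2 * π) ⊆ Aᶜ := fun θ hθ h ↦
    ((hA' θ ⟨by linarith [hθ.1], hθ.2⟩).1 h).not_gt hθ.1
  have hleft : Ioo (b - 2 * π) a ⊆ Aᶜ := fun θ hθ h ↦
    @hright (θ + 2 * π) ⟨by linarith [hθ.1], by linarith [hθ.2]⟩
      ((hA _).2 (by rw [toIcoMod_add_right]; exact (hA θ).1 h))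
  have hlt : b - 2 * π < a := by linarith [pi_pos]
  have hlt' : b < a + 2 * π := by linarith [pi_pos]
  refine ⟨(hA' a ⟨le_rfl, by linarith⟩).2 hab.le, closure_mono hleft ?_,
    (hA' b ⟨hab.le, hlt'⟩).2 le_rfl, closure_mono hright ?_⟩
  · rw [closure_Ioo hlt.ne]; exact ⟨hlt.le, le_rfl⟩
  · rw [closure_Ioo hlt'.ne]; exact ⟨le_rfl, hlt'.le⟩

end ArcConvex

/-- The point at arc length `α` on the great circle leaving `x` in the direction `w`. -/
noncomputable def geodesic (x w : Fin 3 → ℝ) (α : ℝ) : Fin 3 → ℝ := cos α • x + sin α • w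

@[simp] lemma geodesic_zero (x w : Fin 3 → ℝ) : geodesic x w 0 = x := by simp [geodesic]

@[simp] lemma geodesic_pi (x w : Fin 3 → ℝ) : geodesic x w π = -x := by simp [geodesic]

@[simp] lemma geodesic_pi_div_two (x w : Fin 3 → ℝ) : geodesic x w (π / 2) = w := by
  simp [geodesic]

lemma geodesic_periodic (x w : Fin 3 → ℝ) : Function.Periodic (geodesic x w) (2 * π) := by
  intro α; simp [geodesic]

lemma geodesic_add (x w : Fin 3 → ℝ) (a b : ℝ) :
    geodesic x w (a + b) = geodesic (geodesic x w a) (geodesic x w (a + π / 2)) b := by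
  simp only [geodesic, cos_add, sin_add, cos_pi_div_two, sin_pi_div_two, smul_add, smul_smul]
  module

lemma dot3_geodesic_left (x w z : Fin 3 → ℝ) (a : ℝ) :
    dot3 (geodesic x w a) z = cos a * dot3 x z + sin a * dot3 w z := by
  simp only [geodesic, dot3, Pi.add_apply, Pi.smul_apply, smul_eq_mul]; ring

lemma dot3_geodesic_right (x w z : Fin 3 → ℝ) (a : ℝ) :
    dot3 z (geodesic x w a) = cos a * dot3 z x + sin a * dot3 z w := by
  rw [dot3_comm, dot3_geodesic_left, dot3_comm x, dot3_comm w]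

lemma dot3_geodesic_geodesic {x w : Fin 3 → ℝ} (hx : dot3 x x = 1) (hw : dot3 w w = 1)
    (hxw : dot3 x w = 0) (a b : ℝ) :
    dot3 (geodesic x w a) (geodesic x w b) = cos (a - b) := by
  rw [dot3_geodesic_left, dot3_geodesic_right, dot3_geodesic_right, hx, hw, hxw,
    dot3_comm w x, hxw, cos_sub]
  ring

lemma geodesic_unique {x w w' : Fin 3 → ℝ} {a a' : ℝ} (hx : dot3 x x = 1) (hw : dot3 x w = 0)
    (hw' : dot3 x w' = 0) (ha : a ∈ Ioo 0 π) (ha' : a' ∈ Icc 0 π)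
    (h : geodesic x w a = geodesic x w' a') : a = a' ∧ w = w' := by
  have hcos : cos a = cos a' := by
    simpa [dot3_geodesic_right, hx, hw, hw'] using congrArg (dot3 x) h
  have haa' : a = a' := injOn_cos (Ioo_subset_Icc_self ha) ha' hcos
  subst haa'
  refine ⟨rfl, smul_right_injective _ (sin_pos_of_pos_of_lt_pi ha.1 ha.2).ne' ?_⟩
  simpa [geodesic] using h

lemma SphConvex.halfGreatCircle_subset {X : Set (Fin 3 → ℝ)} {p q : Fin 3 → ℝ} {α : ℝ}
    (hconv : SphConvex X) (hpX : p ∈ X) (hnpX : -p ∈ X) (hp : dot3 p p = 1) (hq : dot3 q q = 1)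
    (hpq : dot3 p q = 0) (hα : α ∈ Ioo 0 π) (hx : geodesic p q α ∈ X) :
    halfGreatCircle p q ⊆ X := by
  set x := geodesic p q α
  obtain ⟨w, L, -, hpw, hL0, hLπ, hpx, harc⟩ := hconv p hpX x hx
  obtain ⟨rfl, rfl⟩ := geodesic_unique hp hpq hpw hα ⟨hL0, hLπ⟩ hpx
  -- from `x` the half great circle continues to `-p` with velocity `q'`
  set q' := geodesic p q (α + π / 2)
  have hxnp : geodesic x q' (π - α) = -p := by
    rw [← geodesic_add, add_sub_cancel, geodesic_pi]
  have hx1 : dot3 x x = 1 := by rw [dot3_geodesic_geodesic hp hq hpq, sub_self, cos_zero]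
  have hxq' : dot3 x q' = 0 := by
    rw [dot3_geodesic_geodesic hp hq hpq, show α - (α + π / 2) = -(π / 2) by ring, cos_neg,
      cos_pi_div_two]
  obtain ⟨w', M, -, hxw', hM0, hMπ, hxnp', harc'⟩ := hconv x hx (-p) hnpX
  obtain ⟨rfl, rfl⟩ := geodesic_unique hx1 hxq' hxw' ⟨by linarith [hα.2], by linarith [hα.1]⟩
    ⟨hM0, hMπ⟩ (hxnp.trans hxnp')
  rintro y ⟨γ, hγ, rfl⟩
  show geodesic p q γ ∈ X
  rcases le_total γ α with hγα | hαγ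
  · exact harc γ ⟨hγ.1, hγα⟩
  · rw [← add_sub_cancel α γ, geodesic_add]
    exact harc' (γ - α) ⟨by linarith, by linarith [hγ.2]⟩

def sphFrontier (X : Set (Fin 3 → ℝ)) : Set (Fin 3 → ℝ) :=
  {x ∈ X | ∀ r > (0 : ℝ), ∃ y ∈ unitSphere2, dot3 (y - x) (y - x) < r ∧ y ∉ X}

structure Frame where
  p : Fin 3 → ℝ
  u : Fin 3 → ℝ
  dot3_p_p : dot3 p p = 1
  dot3_u_u : dot3 u u = 1
  dot3_p_u : dot3 p u = 0

namespace Frame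

variable (F : Frame)

def v : Fin 3 → ℝ := F.p ⨯₃ F.u

/-- The unit vector orthogonal to `p` at longitude `θ`. -/
noncomputable def dir (θ : ℝ) : Fin 3 → ℝ := geodesic F.u F.v θ

lemma dot3_v_v : dot3 F.v F.v = 1 := by
  rw [v, dot3_eq_dotProduct, cross_dot_cross, ← dot3_eq_dotProduct, ← dot3_eq_dotProduct,
    ← dot3_eq_dotProduct, F.dot3_p_p, F.dot3_u_u, F.dot3_p_u]
  ring

lemma dot3_p_v : dot3 F.p F.v = 0 := by rw [v, dot3_eq_dotProduct, dot_self_cross]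

lemma dot3_u_v : dot3 F.u F.v = 0 := by rw [v, dot3_eq_dotProduct, dot_cross_self]

lemma dot3_dir_dir (a b : ℝ) : dot3 (F.dir a) (F.dir b) = cos (a - b) :=
  dot3_geodesic_geodesic F.dot3_u_u F.dot3_v_v F.dot3_u_v a b

lemma dot3_dir_self (θ : ℝ) : dot3 (F.dir θ) (F.dir θ) = 1 := by
  rw [dot3_dir_dir, sub_self, cos_zero]

lemma dot3_p_dir (θ : ℝ) : dot3 F.p (F.dir θ) = 0 := by
  rw [dir, dot3_geodesic_right, F.dot3_p_u, F.dot3_p_v]; ring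

lemma dot3_dir_p (θ : ℝ) : dot3 (F.dir θ) F.p = 0 := by rw [dot3_comm, dot3_p_dir]

lemma dir_periodic : Function.Periodic F.dir (2 * π) := geodesic_periodic F.u F.v

lemma dir_add (a b : ℝ) : F.dir (a + b) = geodesic (F.dir a) (F.dir (a + π / 2)) b :=
  geodesic_add F.u F.v a b

lemma dir_ne_dir {a b : ℝ} (hab : a < b) (hba : b ≤ a + π) : F.dir a ≠ F.dir b := by
  intro h
  have hcos : cos (b - a) < cos 0 :=
    cos_lt_cos_of_nonneg_of_le_pi le_rfl (by linarith) (by linarith)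
  rw [cos_zero, ← F.dot3_dir_dir, h, dot3_dir_self] at hcos
  exact lt_irrefl _ hcos

lemma eq_smul_add_smul_add_smul (y : Fin 3 → ℝ) :
    y = dot3 y F.p • F.p + dot3 y F.u • F.u + dot3 y F.v • F.v := by
  have h := dot3_cross_smul_cross F.p F.u y
  rw [F.dot3_p_p, F.dot3_u_u, F.dot3_p_u, ← v] at h
  rw [h]
  module

/-- Spherical law of cosines. -/
lemma dot3_geodesic_dir (α β a b : ℝ) :
    dot3 (geodesic F.p (F.dir a) α) (geodesic F.p (F.dir b) β) =
      cos α * cos β + sin α * sin β * cos (a - b) := by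
  simp only [dot3_geodesic_left, dot3_geodesic_right, F.dot3_p_p, dot3_p_dir, dot3_dir_p,
    dot3_dir_dir]
  ring

lemma dot3_geodesic_dir_dir (α θ φ : ℝ) :
    dot3 (geodesic F.p (F.dir θ) α) (F.dir φ) = sin α * cos (θ - φ) := by
  simpa using F.dot3_geodesic_dir α (π / 2) θ φ

lemma geodesic_mem_unitSphere2 (α θ : ℝ) : geodesic F.p (F.dir θ) α ∈ unitSphere2 := by
  show dot3 _ _ = 1
  rw [dot3_geodesic_dir, sub_self, cos_zero]
  linear_combination sin_sq_add_cos_sq α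

lemma dot3_geodesic_dir_sub_lt {α a b r : ℝ} (h : dist a b < √r) :
    dot3 (geodesic F.p (F.dir a) α - geodesic F.p (F.dir b) α)
      (geodesic F.p (F.dir a) α - geodesic F.p (F.dir b) α) < r := by
  have hab : (a - b) ^ 2 < r := by
    rwa [Real.dist_eq, lt_sqrt (abs_nonneg _), sq_abs] at h
  have hcos := one_sub_sq_div_two_le_cos (x := a - b)
  rw [dot3_sub_sub, dot3_geodesic_dir, dot3_geodesic_dir, dot3_geodesic_dir, sub_self, cos_zero,
    sub_self, cos_zero]
  nlinarith [sin_sq_add_cos_sq α, sq_nonneg (cos α), sin_sq_le_one α]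

lemma exists_eq_geodesic {y : Fin 3 → ℝ} (hy : y ∈ unitSphere2) :
    ∃ α ∈ Icc 0 π, ∃ θ, y = geodesic F.p (F.dir θ) α := by
  set c := dot3 y F.p
  set a := dot3 y F.u
  set b := dot3 y F.v
  have hdec := F.eq_smul_add_smul_add_smul y
  have hsum : c ^ 2 + a ^ 2 + b ^ 2 = 1 := by
    have hyy : dot3 y y = 1 := hy
    have h := congrArg (dot3 y) hdec
    rw [dot3_add_smul_right] at h
    linear_combination hyy - h
  obtain ⟨θ, ha, hb⟩ := exists_eq_sqrt_mul_cos_and_eq_sqrt_mul_sin a b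
  have hsin : sin (arccos c) = √(a ^ 2 + b ^ 2) := by
    rw [sin_arccos, show 1 - c ^ 2 = a ^ 2 + b ^ 2 by linarith]
  have hcos : cos (arccos c) = c := cos_arccos (by nlinarith) (by nlinarith)
  refine ⟨arccos c, ⟨arccos_nonneg c, arccos_le_pi c⟩, θ, ?_⟩
  rw [geodesic, dir, geodesic, hcos, hsin]
  linear_combination (norm := module) hdec + ha • F.u + hb • F.v

variable {X : Set (Fin 3 → ℝ)}

def dirSet (X : Set (Fin 3 → ℝ)) : Set ℝ := {θ | halfGreatCircle F.p (F.dir θ) ⊆ X}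

lemma geodesic_mem_iff (hconv : SphConvex X) (hpX : F.p ∈ X) (hnpX : -F.p ∈ X) {α θ : ℝ}
    (hα : α ∈ Ioo 0 π) : geodesic F.p (F.dir θ) α ∈ X ↔ θ ∈ F.dirSet X :=
  ⟨fun h ↦ hconv.halfGreatCircle_subset hpX hnpX F.dot3_p_p (F.dot3_dir_self θ) (F.dot3_p_dir θ)
    hα h, fun h ↦ h ⟨α, Ioo_subset_Icc_self hα, rfl⟩⟩

lemma geodesic_mem_iff_of_mem_Icc (hconv : SphConvex X) (hpX : F.p ∈ X) (hnpX : -F.p ∈ X)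
    {α θ : ℝ} (hα : α ∈ Icc 0 π) :
    geodesic F.p (F.dir θ) α ∈ X ↔ sin α = 0 ∨ θ ∈ F.dirSet X := by
  rcases eq_endpoints_or_mem_Ioo_of_mem_Icc hα with rfl | rfl | hα
  · simpa using hpX
  · simpa using hnpX
  · rw [F.geodesic_mem_iff hconv hpX hnpX hα, or_iff_right (sin_pos_of_pos_of_lt_pi hα.1 hα.2).ne']

lemma isClosed_dirSet (hclosed : IsClosed X) : IsClosed (F.dirSet X) := by
  have : F.dirSet X = ⋂ α ∈ Icc 0 π, (fun θ ↦ geodesic F.p (F.dir θ) α) ⁻¹' X := by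
    ext θ
    simp only [dirSet, halfGreatCircle, mem_iInter, mem_preimage, ofPred_subset]
    exact ⟨fun h α hα ↦ h _ ⟨α, hα, rfl⟩, fun h x ⟨α, hα, hx⟩ ↦ hx ▸ h α hα⟩
  rw [this]
  refine isClosed_biInter fun α _ ↦ hclosed.preimage ?_
  simp only [geodesic, dir]
  fun_prop

lemma periodic_mem_dirSet : Function.Periodic (· ∈ F.dirSet X) (2 * π) := by
  intro θ
  simp only [dirSet, mem_ofPred_eq, F.dir_periodic θ]

lemma arcConvex_dirSet (hconv : SphConvex X) (hpX : F.p ∈ X) (hnpX : -F.p ∈ X) :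
    ArcConvex (F.dirSet X) := by
  have hdirX : ∀ θ ∈ F.dirSet X, F.dir θ ∈ X := fun θ h ↦ by
    simpa using h ⟨π / 2, ⟨by positivity, by linarith [pi_pos]⟩, rfl⟩
  intro s hs t ht hst hts θ hθ
  rcases hst.eq_or_lt with rfl | hst
  · rwa [le_antisymm hθ.2 hθ.1]
  obtain ⟨w, L, -, hsw, hL0, hLπ, hst', harc⟩ := hconv _ (hdirX s hs) _ (hdirX t ht)
  have hts' : geodesic (F.dir s) (F.dir (s + π / 2)) (t - s) = F.dir t := by
    rw [← dir_add, add_sub_cancel]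
  have hs_perp : dot3 (F.dir s) (F.dir (s + π / 2)) = 0 := by
    rw [dot3_dir_dir, show s - (s + π / 2) = -(π / 2) by ring, cos_neg, cos_pi_div_two]
  obtain ⟨rfl, rfl⟩ := geodesic_unique (F.dot3_dir_self s) hs_perp hsw
    ⟨by linarith, hts⟩ ⟨hL0, hLπ⟩ (hts'.trans hst')
  have hθX : F.dir θ ∈ X := by
    rw [← add_sub_cancel s θ, dir_add]
    exact harc (θ - s) ⟨by linarith [hθ.1], by linarith [hθ.2]⟩
  rw [← F.geodesic_mem_iff hconv hpX hnpX (α := π / 2) ⟨by positivity, by linarith [pi_pos]⟩]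
  simpa using hθX

lemma dirSet_ne_univ (hp : F.p ∈ sphFrontier X) : F.dirSet X ≠ univ := by
  obtain ⟨y, hy, -, hyX⟩ := hp.2 1 one_pos
  obtain ⟨α, hα, θ, rfl⟩ := F.exists_eq_geodesic hy
  exact fun h ↦ hyX ((h ▸ mem_univ θ : θ ∈ F.dirSet X) ⟨α, hα, rfl⟩)

lemma interior_dirSet_nonempty (hX : X ⊆ unitSphere2) (hconv : SphConvex X)
    (hp : F.p ∈ sphFrontier X) (hnp : -F.p ∈ sphFrontier X)
    (hint : ∃ x ∈ X, ∃ r > (0 : ℝ), ∀ y ∈ unitSphere2, dot3 (y - x) (y - x) < r → y ∈ X) :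
    (interior (F.dirSet X)).Nonempty := by
  obtain ⟨x, hx, r, hr, hball⟩ := hint
  have not_frontier : ∀ y ∈ sphFrontier X, x ≠ y := by
    rintro y ⟨-, hy⟩ rfl
    obtain ⟨z, hz, hzx, hzX⟩ := hy r hr
    exact hzX (hball z hz hzx)
  obtain ⟨α, hα, θ, rfl⟩ := F.exists_eq_geodesic (hX hx)
  rcases eq_endpoints_or_mem_Ioo_of_mem_Icc hα with rfl | rfl | hα
  · exact absurd (geodesic_zero _ _) (not_frontier _ hp)
  · exact absurd (geodesic_pi _ _) (not_frontier _ hnp)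
  refine ⟨θ, mem_interior_iff_mem_nhds.2 (Metric.mem_nhds_iff.2 ⟨√r, sqrt_pos.2 hr, ?_⟩)⟩
  intro t ht
  rw [← F.geodesic_mem_iff hconv hp.1 hnp.1 hα]
  exact hball _ (F.geodesic_mem_unitSphere2 α t) (F.dot3_geodesic_dir_sub_lt ht)

lemma halfGreatCircle_subset_sphFrontier (hconv : SphConvex X) (hp : F.p ∈ sphFrontier X)
    (hnp : -F.p ∈ sphFrontier X) {θ : ℝ} (hθ : θ ∈ F.dirSet X)
    (hθ' : θ ∈ closure (F.dirSet X)ᶜ) : halfGreatCircle F.p (F.dir θ) ⊆ sphFrontier X := by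
  rintro x ⟨α, hα, rfl⟩
  rcases eq_endpoints_or_mem_Ioo_of_mem_Icc hα with rfl | rfl | hα'
  · simpa using hp
  · simpa using hnp
  refine ⟨hθ ⟨α, hα, rfl⟩, fun r hr ↦ ?_⟩
  obtain ⟨t, ht, hθt⟩ := Metric.mem_closure_iff.1 hθ' (√r) (sqrt_pos.2 hr)
  refine ⟨geodesic F.p (F.dir t) α, F.geodesic_mem_unitSphere2 α t,
    F.dot3_geodesic_dir_sub_lt (by rwa [dist_comm]), ?_⟩
  rwa [F.geodesic_mem_iff hconv hp.1 hnp.1 hα']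

lemma eq_lune (hX : X ⊆ unitSphere2) (hconv : SphConvex X) (hpX : F.p ∈ X) (hnpX : -F.p ∈ X)
    {a b : ℝ} (hab : a < b) (hba : b ≤ a + π)
    (hA : ∀ θ, θ ∈ F.dirSet X ↔ toIcoMod two_pi_pos a θ ≤ b) :
    X = {x ∈ unitSphere2 | 0 ≤ dot3 x (F.dir (a + π / 2)) ∧ 0 ≤ dot3 x (F.dir (b - π / 2))} := by
  ext x
  by_cases hx : x ∈ unitSphere2
  swap
  · exact iff_of_false (fun h ↦ hx (hX h)) (fun h ↦ hx h.1)
  obtain ⟨α, hα, θ, rfl⟩ := F.exists_eq_geodesic hx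
  rw [← F.dir_periodic.apply_toIcoMod two_pi_pos a θ]
  have ht := toIcoMod_mem_Ico two_pi_pos a θ
  generalize toIcoMod two_pi_pos a θ = t at ht ⊢
  have hcos₁ : cos (t - (a + π / 2)) = sin (t - a) := by
    rw [← cos_sub_pi_div_two]; congr 1; ring
  have hcos₂ : cos (t - (b - π / 2)) = sin (b - t) := by
    rw [← cos_sub_pi_div_two, ← cos_neg]; congr 1; ring
  rw [F.geodesic_mem_iff_of_mem_Icc hconv hpX hnpX hα, hA, (toIcoMod_eq_self two_pi_pos).2 ht,
    mem_sep_iff, F.dot3_geodesic_dir_dir, F.dot3_geodesic_dir_dir, hcos₁, hcos₂,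
    ← sin_sub_nonneg_and_sin_sub_nonneg_iff hab hba ht]
  rcases (sin_nonneg_of_nonneg_of_le_pi hα.1 hα.2).eq_or_lt with h | h
  · simp [← h, F.geodesic_mem_unitSphere2]
  · simp [h.ne', mul_nonneg_iff_of_pos_left h, F.geodesic_mem_unitSphere2]

end Frame

theorem stmt_10_general (X Γ : Set (Fin 3 → ℝ)) (p : Fin 3 → ℝ)
    (hX : X ⊆ unitSphere2) (hclosed : IsClosed X) (hconv : SphConvex X)
    (hint : ∃ x ∈ X, ∃ r > (0 : ℝ), ∀ y ∈ unitSphere2, dot3 (y - x) (y - x) < r → y ∈ X)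
    (hΓ : Γ = {x ∈ X | ∀ r > (0 : ℝ), ∃ y ∈ unitSphere2, dot3 (y - x) (y - x) < r ∧ y ∉ X})
    (hp : p ∈ Γ) (hp' : -p ∈ Γ) :
    (∃ u v : Fin 3 → ℝ, dot3 u u = 1 ∧ dot3 v v = 1 ∧ dot3 u p = 0 ∧ dot3 v p = 0 ∧
      X = {x ∈ unitSphere2 | 0 ≤ dot3 x u ∧ 0 ≤ dot3 x v}) ∧
    (∃ w₁ w₂ : Fin 3 → ℝ, w₁ ≠ w₂ ∧ dot3 w₁ w₁ = 1 ∧ dot3 w₂ w₂ = 1 ∧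
      dot3 w₁ p = 0 ∧ dot3 w₂ p = 0 ∧
      halfGreatCircle p w₁ ⊆ Γ ∧ halfGreatCircle p w₂ ⊆ Γ) := by
  subst hΓ
  obtain ⟨u, -, hu, hpu, -⟩ := hconv p hp.1 (-p) hp'.1
  let F : Frame := ⟨p, u, hX hp.1, hu, hpu⟩
  obtain ⟨a, b, hab, hba, hA⟩ := (F.arcConvex_dirSet hconv hp.1 hp'.1).exists_mem_iff_toIcoMod_le
    (F.isClosed_dirSet hclosed) F.periodic_mem_dirSet (F.dirSet_ne_univ hp)
    (F.interior_dirSet_nonempty hX hconv hp hp' hint)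
  obtain ⟨ha, ha', hb, hb'⟩ := mem_closure_compl_of_forall_mem_iff hab hba hA
  exact ⟨⟨F.dir (a + π / 2), F.dir (b - π / 2), F.dot3_dir_self _, F.dot3_dir_self _,
      F.dot3_dir_p _, F.dot3_dir_p _, F.eq_lune hX hconv hp.1 hp'.1 hab hba hA⟩,
    ⟨F.dir a, F.dir b, F.dir_ne_dir hab hba, F.dot3_dir_self _, F.dot3_dir_self _,
      F.dot3_dir_p _, F.dot3_dir_p _, F.halfGreatCircle_subset_sphFrontier hconv hp hp' ha ha',
      F.halfGreatCircle_subset_sphFrontier hconv hp hp' hb hb'⟩⟩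

/-- Let `Γ ⊆ S²` be a simple closed curve which bounds a closed spherically
convex region `X` with nonempty interior (relative to the sphere), and suppose `Γ` contains a
pair of antipodal points `±p`.  Then `Γ` bounds a lune: `X` is the intersection of the sphere
with two closed half-spaces whose boundary planes contain the axis through `±p`; in particular
`Γ` contains two distinct half-great-circle (geodesic) subarcs with endpoints `±p`. -/
theorem stmt_10 (X Γ : Set (Fin 3 → ℝ)) (p : Fin 3 → ℝ)
    (hX : X ⊆ unitSphere2) (hclosed : IsClosed X) (hconv : SphConvex X)
    (hint : ∃ x ∈ X, ∃ r > (0 : ℝ), ∀ y ∈ unitSphere2, dot3 (y - x) (y - x) < r → y ∈ X)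
    (hΓ : Γ = {x ∈ X | ∀ r > (0 : ℝ), ∃ y ∈ unitSphere2, dot3 (y - x) (y - x) < r ∧ y ∉ X})
    (hcurve : ∃ c : ℝ → Fin 3 → ℝ, Continuous c ∧ Function.Periodic c (2 * Real.pi) ∧
      Set.InjOn c (Set.Ico 0 (2 * Real.pi)) ∧ Set.range c = Γ)
    (hp : p ∈ Γ) (hp' : -p ∈ Γ) :
    (∃ u v : Fin 3 → ℝ, dot3 u u = 1 ∧ dot3 v v = 1 ∧ dot3 u p = 0 ∧ dot3 v p = 0 ∧
      X = {x ∈ unitSphere2 | 0 ≤ dot3 x u ∧ 0 ≤ dot3 x v}) ∧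
    (∃ w₁ w₂ : Fin 3 → ℝ, w₁ ≠ w₂ ∧ dot3 w₁ w₁ = 1 ∧ dot3 w₂ w₂ = 1 ∧
      dot3 w₁ p = 0 ∧ dot3 w₂ p = 0 ∧
      halfGreatCircle p w₁ ⊆ Γ ∧ halfGreatCircle p w₂ ⊆ Γ) :=
  stmt_10_general X Γ p hX hclosed hconv hint hΓ hp hp'
end

section
/- Let γ : [0,L) → ℝ^2 be a unit-speed curve with continuous strictly-positive (or strictly-negative) signed curvature, converging to a point o as t → L, such that no tangent line of γ passes through o (i.e., γ(t) - o is never parallel to γ'(t)). If the tangent angle θ(t) is unbounded, then γ winds around o indefinitely: the angle of γ(t) - o is also unbounded. -/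
open Filter Topology

open Set Real

/-! Writing `γ t - o = r t • (cos φ t, sin φ t)`, the cross product of `γ t - o` with the tangent
`(cos θ t, sin θ t)` is `r t * sin (θ t - φ t)`, so no tangent through `o` means
`sin (θ t - φ t) ≠ 0`. The continuous function `θ - φ` on the interval `[0, L)` therefore never
meets `π ℤ`, so it stays in a single interval `[nπ, (n + 1)π]`, and a bounded difference
transfers unboundedness from `θ` to `φ`. -/

lemma polar_fst_mul_sin_sub_snd_mul_cos (r φ θ : ℝ) :
    (r • ((cos φ, sin φ) : ℝ × ℝ)).1 * sin θ - (r • ((cos φ, sin φ) : ℝ × ℝ)).2 * cos θ =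
      r * sin (θ - φ) := by
  simp only [Prod.smul_mk, smul_eq_mul, sin_sub]
  ring

lemma exists_mapsTo_Icc_add_pi_of_sin_ne_zero {α : Type*} [TopologicalSpace α] {s : Set α}
    {ψ : α → ℝ} (hs : IsPreconnected s) (hψ : ContinuousOn ψ s)
    (hsin : ∀ t ∈ s, sin (ψ t) ≠ 0) : ∃ c, MapsTo ψ s (Icc c (c + π)) := by
  rcases s.eq_empty_or_nonempty with rfl | ⟨t₀, ht₀⟩
  · exact ⟨0, mapsTo_empty _ _⟩
  set n : ℤ := ⌊ψ t₀ / π⌋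
  have hn_le : n * π ≤ ψ t₀ := (le_div_iff₀ pi_pos).1 (Int.floor_le _)
  have hlt_n : ψ t₀ < (n + 1) * π := (div_lt_iff₀ pi_pos).1 (Int.lt_floor_add_one _)
  have himage : IsPreconnected (ψ '' s) := hs.image ψ hψ
  have havoid : ∀ m : ℤ, (m * π) ∉ ψ '' s := by
    rintro m ⟨t, ht, he⟩
    exact hsin t ht (he ▸ sin_int_mul_pi m)
  refine ⟨n * π, fun t ht => ⟨?_, ?_⟩⟩
  · by_contra! h
    exact havoid n
      (himage.Icc_subset (mem_image_of_mem ψ ht) (mem_image_of_mem ψ ht₀) ⟨h.le, hn_le⟩)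
  · by_contra! h
    refine havoid (n + 1) ?_
    push_cast
    exact himage.Icc_subset (mem_image_of_mem ψ ht₀) (mem_image_of_mem ψ ht)
      ⟨hlt_n.le, by linarith⟩

section BddImage

variable {α : Type*} {s : Set α} {f g : α → ℝ} {C : ℝ}

lemma bddAbove_image_of_le_add (h : ∀ x ∈ s, f x ≤ g x + C) (hg : BddAbove (g '' s)) :
    BddAbove (f '' s) := by
  obtain ⟨M, hM⟩ := hg
  exact ⟨M + C, forall_mem_image.2 fun x hx =>
    (h x hx).trans (add_le_add_left (hM (mem_image_of_mem g hx)) C)⟩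

lemma bddBelow_image_of_add_le (h : ∀ x ∈ s, g x + C ≤ f x) (hg : BddBelow (g '' s)) :
    BddBelow (f '' s) := by
  obtain ⟨M, hM⟩ := hg
  exact ⟨M + C, forall_mem_image.2 fun x hx =>
    (add_le_add_left (hM (mem_image_of_mem g hx)) C).trans (h x hx)⟩

end BddImage

theorem stmt_12_general (L : ℝ) (γ : ℝ → ℝ × ℝ) (θ k φ r : ℝ → ℝ) (o : ℝ × ℝ)
    (hθ' : ∀ t ∈ Set.Ico 0 L, HasDerivAt θ (k t) t)
    (hpar : ∀ t ∈ Set.Ico 0 L,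
      (γ t - o).1 * Real.sin (θ t) - (γ t - o).2 * Real.cos (θ t) ≠ 0)
    (hφc : ContinuousOn φ (Set.Ico 0 L))
    (hlift : ∀ t ∈ Set.Ico 0 L,
      γ t - o = r t • ((Real.cos (φ t), Real.sin (φ t)) : ℝ × ℝ))
    (hub : ¬ BddAbove (θ '' Set.Ico 0 L) ∨ ¬ BddBelow (θ '' Set.Ico 0 L)) :
    ¬ BddAbove (φ '' Set.Ico 0 L) ∨ ¬ BddBelow (φ '' Set.Ico 0 L) := by
  have hsin : ∀ t ∈ Ico 0 L, sin (θ t - φ t) ≠ 0 := fun t ht hzero => hpar t ht <| by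
    rw [hlift t ht, polar_fst_mul_sin_sub_snd_mul_cos, hzero, mul_zero]
  obtain ⟨c, hc⟩ := exists_mapsTo_Icc_add_pi_of_sin_ne_zero isPreconnected_Ico
    ((HasDerivAt.continuousOn hθ').sub hφc) hsin
  refine hub.imp (mt <| bddAbove_image_of_le_add (C := c + π) fun t ht => ?_)
    (mt <| bddBelow_image_of_add_le (C := c) fun t ht => ?_)
  · linarith [(hc ht).2, show (θ - φ) t = θ t - φ t from rfl]
  · linarith [(hc ht).1, show (θ - φ) t = θ t - φ t from rfl]

/-- (Winding of a spiral about its vortex.) Let `γ : [0,L) → ℝ²` be a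
unit-speed curve with tangent angle `θ` (`γ' = (cos θ, sin θ)`, `θ' = k` continuous and of
constant strict sign), converging to `o` as `t → L`, whose tangent lines never pass through
`o` (`γ(t) - o` is never parallel to `γ'(t)`).  Write `γ(t) - o = r(t)•(cos φ(t), sin φ(t))`
with `r > 0` and `φ` a continuous angle lift.  If `θ` is unbounded then `φ` is unbounded,
i.e. `γ` winds around `o` indefinitely. -/
theorem stmt_12 (L : ℝ) (hL : 0 < L) (γ : ℝ → ℝ × ℝ) (θ k φ r : ℝ → ℝ) (o : ℝ × ℝ)
    (hγ : ∀ t ∈ Set.Ico 0 L, HasDerivAt γ ((Real.cos (θ t), Real.sin (θ t)) : ℝ × ℝ) t)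
    (hθ' : ∀ t ∈ Set.Ico 0 L, HasDerivAt θ (k t) t)
    (hkc : ContinuousOn k (Set.Ico 0 L))
    (hsign : (∀ t ∈ Set.Ico 0 L, 0 < k t) ∨ (∀ t ∈ Set.Ico 0 L, k t < 0))
    (ho : Tendsto γ (nhdsWithin L (Set.Ico 0 L)) (nhds o))
    (hne : ∀ t ∈ Set.Ico 0 L, γ t ≠ o)
    (hpar : ∀ t ∈ Set.Ico 0 L,
      (γ t - o).1 * Real.sin (θ t) - (γ t - o).2 * Real.cos (θ t) ≠ 0)
    (hr : ∀ t ∈ Set.Ico 0 L, 0 < r t)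
    (hφc : ContinuousOn φ (Set.Ico 0 L))
    (hlift : ∀ t ∈ Set.Ico 0 L,
      γ t - o = r t • ((Real.cos (φ t), Real.sin (φ t)) : ℝ × ℝ))
    (hub : ¬ BddAbove (θ '' Set.Ico 0 L) ∨ ¬ BddBelow (θ '' Set.Ico 0 L)) :
    ¬ BddAbove (φ '' Set.Ico 0 L) ∨ ¬ BddBelow (φ '' Set.Ico 0 L) :=
  stmt_12_general L γ θ k φ r o hθ' hpar hφc hlift hub
end

section
/- Let Γ ⊂ ℝ^2 be a simple C^1-regular arc, C^2-regular in its interior, tangent at an endpoint p to a line C, with Γ lying on one side of C near p. If the unit normal N(p) points to the side of C containing Γ near p, then either Γ coincides with C near p, or the signed geodesic curvature of Γ (with respect to the normal field extending N) is strictly positive at some point in every neighborhood of p. -/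
/-!
Write `cross d x = d.1 * x.2 - d.2 * x.1 = ⟨x, n⟩`, where `n = (-d.2, d.1)` is the normal of `C`.
Suppose the curvature `k = cross γ' γ''` is `≤ 0` on some `(0, ε)`. Since `γ'` has unit length,
`γ'' ⟂ γ'`, so the normal velocity `v = cross d γ'` has derivative `v' = k ⟨γ', d⟩`, which is
`≤ 0` near `p` because `γ'(0) = d`. As `v(0) = 0`, we get `v ≤ 0`, so the height
`h = cross d (γ - p)` of the arc above `C` is nonincreasing from `h(0) = 0`. Together with
`h ≥ 0` this forces `h = 0`: the arc runs along `C`.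
-/

open Set Filter Topology

section ProdDeriv

variable {𝕜 E F : Type*} [NontriviallyNormedField 𝕜] [NormedAddCommGroup E] [NormedSpace 𝕜 E]
  [NormedAddCommGroup F] [NormedSpace 𝕜 F] {f : 𝕜 → E × F} {f' : E × F} {x : 𝕜}

theorem HasDerivAt.fst (hf : HasDerivAt f f' x) : HasDerivAt (fun t => (f t).1) f'.1 x := by
  simpa using hf.hasFDerivAt.fst.hasDerivAt

theorem HasDerivAt.snd (hf : HasDerivAt f f' x) : HasDerivAt (fun t => (f t).2) f'.2 x := by
  simpa using hf.hasFDerivAt.snd.hasDerivAt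

end ProdDeriv

namespace PlaneCurve

def cross (a b : ℝ × ℝ) : ℝ := a.1 * b.2 - a.2 * b.1

def dot (a b : ℝ × ℝ) : ℝ := a.1 * b.1 + a.2 * b.2

@[simp]
theorem cross_self (a : ℝ × ℝ) : cross a a = 0 := by
  rw [cross, mul_comm, sub_self]

@[simp]
theorem cross_zero (a : ℝ × ℝ) : cross a 0 = 0 := by
  simp [cross]

theorem eventually_dot_pos_of_continuousOn {f : ℝ → ℝ × ℝ} {d : ℝ × ℝ} {a b : ℝ} (hab : a < b)
    (hf : ContinuousOn f (Icc a b)) (hd : d.1 ^ 2 + d.2 ^ 2 = 1) (hfa : f a = d) :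
    ∀ᶠ t in 𝓝[≥] a, 0 < dot (f t) d := by
  have hcont : ContinuousOn (fun t => dot (f t) d) (Icc a b) := by unfold dot; fun_prop
  have hlim : Tendsto (fun t => dot (f t) d) (𝓝[≥] a) (𝓝 (dot (f a) d)) :=
    nhdsWithin_Icc_eq_nhdsGE hab ▸ hcont a ⟨le_rfl, hab.le⟩
  refine hlim.eventually_const_lt ?_
  rw [hfa, dot, ← sq, ← sq, hd]
  exact one_pos

theorem hasDerivAt_cross_left (a : ℝ × ℝ) {f : ℝ → ℝ × ℝ} {f' : ℝ × ℝ} {x : ℝ}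
    (hf : HasDerivAt f f' x) : HasDerivAt (fun t => cross a (f t)) (cross a f') x :=
  (hf.snd.const_mul a.1).sub (hf.fst.const_mul a.2)

theorem continuousOn_cross_left (a : ℝ × ℝ) {f : ℝ → ℝ × ℝ} {s : Set ℝ}
    (hf : ContinuousOn f s) : ContinuousOn (fun t => cross a (f t)) s := by
  unfold cross; fun_prop

theorem dot_eq_zero_of_hasDerivAt_of_unit {f : ℝ → ℝ × ℝ} {f' : ℝ × ℝ} {x : ℝ}
    (hf : HasDerivAt f f' x) (hunit : ∀ᶠ t in 𝓝 x, (f t).1 ^ 2 + (f t).2 ^ 2 = 1) :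
    dot (f x) f' = 0 := by
  have hsq : HasDerivAt (fun t => (f t).1 ^ 2 + (f t).2 ^ 2) (2 * dot (f x) f') x := by
    refine ((hf.fst.fun_pow 2).add (hf.snd.fun_pow 2)).congr_deriv ?_
    simp only [dot]; ring
  have hconst : HasDerivAt (fun t => (f t).1 ^ 2 + (f t).2 ^ 2) 0 x :=
    (hasDerivAt_const x (1 : ℝ)).congr_of_eventuallyEq hunit
  linarith [hsq.unique hconst]

/-- For a unit vector `w`, any `w' ⟂ w` is `cross w w'` times the rotation `(-w.2, w.1)` of `w`. -/
theorem cross_eq_cross_mul_dot_of_dot_eq_zero (a : ℝ × ℝ) {w w' : ℝ × ℝ}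
    (hw : w.1 ^ 2 + w.2 ^ 2 = 1) (horth : dot w w' = 0) :
    cross a w' = cross w w' * dot w a := by
  simp only [cross, dot] at *
  linear_combination (a.2 * w'.1 - a.1 * w'.2) * hw + (a.1 * w.2 - a.2 * w.1) * horth

theorem eq_add_smul_of_cross_eq_zero {d p x : ℝ × ℝ} (hd : d.1 ^ 2 + d.2 ^ 2 = 1)
    (h : cross d (x - p) = 0) : x = p + dot (x - p) d • d := by
  simp only [cross, Prod.fst_sub, Prod.snd_sub] at h
  ext
  · simp only [dot, Prod.fst_add, Prod.smul_fst, Prod.fst_sub, Prod.snd_sub, smul_eq_mul]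
    linear_combination (p.1 - x.1) * hd - d.2 * h
  · simp only [dot, Prod.snd_add, Prod.smul_snd, Prod.fst_sub, Prod.snd_sub, smul_eq_mul]
    linear_combination (p.2 - x.2) * hd + d.1 * h

theorem le_left_of_hasDerivAt_nonpos {f f' : ℝ → ℝ} {a b t : ℝ}
    (hf : ContinuousOn f (Icc a b)) (hderiv : ∀ x ∈ Ioo a b, HasDerivAt f (f' x) x)
    (hf' : ∀ x ∈ Ioo a b, f' x ≤ 0) (ht : t ∈ Icc a b) : f t ≤ f a := by
  refine antitoneOn_of_hasDerivWithinAt_nonpos (f' := f') (convex_Icc a b) hf ?_ ?_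
    ⟨le_rfl, ht.1.trans ht.2⟩ ht ht.1
  · rw [interior_Icc]
    exact fun x hx => (hderiv x hx).hasDerivWithinAt
  · rwa [interior_Icc]

theorem cross_sub_nonpos_of_curvature_nonpos {γ γ' γ'' : ℝ → ℝ × ℝ} {d : ℝ × ℝ} {a b t : ℝ}
    (hγ : ContinuousOn γ (Icc a b)) (hγ' : ContinuousOn γ' (Icc a b))
    (hd1 : ∀ x ∈ Ioo a b, HasDerivAt γ (γ' x) x) (hd2 : ∀ x ∈ Ioo a b, HasDerivAt γ' (γ'' x) x)
    (hunit : ∀ x ∈ Ioo a b, (γ' x).1 ^ 2 + (γ' x).2 ^ 2 = 1) (htan : cross d (γ' a) = 0)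
    (hforward : ∀ x ∈ Ioo a b, 0 < dot (γ' x) d) (hk : ∀ x ∈ Ioo a b, cross (γ' x) (γ'' x) ≤ 0)
    (ht : t ∈ Icc a b) :
    cross d (γ t - γ a) ≤ 0 := by
  have hnormal : ∀ x ∈ Icc a b, cross d (γ' x) ≤ 0 := by
    intro x hx
    rw [← htan]
    refine le_left_of_hasDerivAt_nonpos (continuousOn_cross_left d hγ')
      (fun y hy => hasDerivAt_cross_left d (hd2 y hy)) (fun y hy => ?_) hx
    have horth : dot (γ' y) (γ'' y) = 0 :=
      dot_eq_zero_of_hasDerivAt_of_unit (hd2 y hy)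
        (eventually_of_mem (Ioo_mem_nhds hy.1 hy.2) hunit)
    rw [cross_eq_cross_mul_dot_of_dot_eq_zero d (hunit y hy) horth]
    exact mul_nonpos_of_nonpos_of_nonneg (hk y hy) (hforward y hy).le
  simpa using le_left_of_hasDerivAt_nonpos (f := fun x => cross d (γ x - γ a))
    (continuousOn_cross_left d (hγ.sub continuousOn_const))
    (fun y hy => hasDerivAt_cross_left d ((hd1 y hy).sub_const (γ a)))
    (fun y hy => hnormal y (Ioo_subset_Icc_self hy)) ht

end PlaneCurve

open PlaneCurve

theorem stmt_17_general (L : ℝ) (hL : 0 < L) (γ γ' γ'' : ℝ → ℝ × ℝ) (p d : ℝ × ℝ)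
    (hstart : γ 0 = p)
    (hdunit : d.1 ^ 2 + d.2 ^ 2 = 1)
    (hd1 : ∀ t ∈ Set.Icc 0 L, HasDerivWithinAt γ (γ' t) (Set.Icc 0 L) t)
    (hγ'c : ContinuousOn γ' (Set.Icc 0 L))
    (hunit : ∀ t ∈ Set.Icc 0 L, (γ' t).1 ^ 2 + (γ' t).2 ^ 2 = 1)
    (hd2 : ∀ t ∈ Set.Ioo 0 L, HasDerivAt γ' (γ'' t) t)
    (htan : γ' 0 = d)
    (hside : ∃ δ > (0 : ℝ), ∀ t ∈ Set.Icc 0 δ ∩ Set.Icc 0 L,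
      0 ≤ (γ t - p).1 * (-d.2) + (γ t - p).2 * d.1) :
    (∃ δ > (0 : ℝ), ∀ t ∈ Set.Icc 0 δ ∩ Set.Icc 0 L, ∃ s : ℝ, γ t = p + s • d) ∨
    (∀ ε > (0 : ℝ), ∃ t ∈ Set.Ioo 0 L, t < ε ∧
      0 < (γ' t).1 * (γ'' t).2 - (γ' t).2 * (γ'' t).1) := by
  refine or_iff_not_imp_right.2 fun hk => ?_
  push Not at hk
  obtain ⟨ε, hε, hk⟩ := hk
  obtain ⟨δ, hδ, hside⟩ := hside
  obtain ⟨M, hM, hsmall⟩ := mem_nhdsGE_iff_exists_Icc_subset.1 <|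
    (eventually_dot_pos_of_continuousOn hL hγ'c hdunit htan).and <|
    ((eventually_lt_nhds hL).and ((eventually_lt_nhds hε).and (eventually_lt_nhds hδ))).filter_mono
      nhdsWithin_le_nhds
  have hIcc : Icc 0 M ⊆ Icc 0 L := fun t ht => ⟨ht.1, (hsmall ht).2.1.le⟩
  have hIoo : Ioo 0 M ⊆ Ioo 0 L := fun t ht => ⟨ht.1, (hsmall (Ioo_subset_Icc_self ht)).2.1⟩
  have hγc : ContinuousOn γ (Icc 0 L) := fun t ht => (hd1 t ht).continuousWithinAt
  refine ⟨M, hM, fun t ht => ⟨_, eq_add_smul_of_cross_eq_zero hdunit (le_antisymm ?_ ?_)⟩⟩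
  · rw [← hstart]
    exact cross_sub_nonpos_of_curvature_nonpos (hγc.mono hIcc) (hγ'c.mono hIcc)
      (fun x hx => (hd1 x (Ioo_subset_Icc_self (hIoo hx))).hasDerivAt
        (Icc_mem_nhds (hIoo hx).1 (hIoo hx).2))
      (fun x hx => hd2 x (hIoo hx)) (fun x hx => hunit x (Ioo_subset_Icc_self (hIoo hx)))
      (by rw [htan, cross_self]) (fun x hx => (hsmall (Ioo_subset_Icc_self hx)).1)
      (fun x hx => hk x (hIoo hx) (hsmall (Ioo_subset_Icc_self hx)).2.2.1) ht.1
  · have := hside t ⟨⟨ht.1.1, (hsmall ht.1).2.2.2.le⟩, ht.2⟩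
    simp only [cross]
    linarith

/-- (Planar maximum principle, Lemma 2.1 with `K = 0`.) Let
`γ : [0,L] → ℝ²` be a unit-speed simple `C¹` arc, `C²` in its interior, starting at `p` and
tangent there to the line `C` through `p` with unit direction `d`; let `n = (-d₂, d₁)` be the
unit normal of `C` (so `N(p) = n` for the normal field `N = rot γ'`).  If near `p` the arc
lies on the side of `C` into which `n` points, then either `γ` coincides with `C` near `p`,
or the signed curvature `k = det(γ', γ'')` is strictly positive at points arbitrarily
close to `p`. -/
theorem stmt_17 (L : ℝ) (hL : 0 < L) (γ γ' γ'' : ℝ → ℝ × ℝ) (p d : ℝ × ℝ)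
    (hstart : γ 0 = p)
    (hdunit : d.1 ^ 2 + d.2 ^ 2 = 1)
    (hd1 : ∀ t ∈ Set.Icc 0 L, HasDerivWithinAt γ (γ' t) (Set.Icc 0 L) t)
    (hγ'c : ContinuousOn γ' (Set.Icc 0 L))
    (hunit : ∀ t ∈ Set.Icc 0 L, (γ' t).1 ^ 2 + (γ' t).2 ^ 2 = 1)
    (hsimple : Set.InjOn γ (Set.Icc 0 L))
    (hd2 : ∀ t ∈ Set.Ioo 0 L, HasDerivAt γ' (γ'' t) t)
    (hγ''c : ContinuousOn γ'' (Set.Ioo 0 L))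
    (htan : γ' 0 = d)
    (hside : ∃ δ > (0 : ℝ), ∀ t ∈ Set.Icc 0 δ ∩ Set.Icc 0 L,
      0 ≤ (γ t - p).1 * (-d.2) + (γ t - p).2 * d.1) :
    (∃ δ > (0 : ℝ), ∀ t ∈ Set.Icc 0 δ ∩ Set.Icc 0 L, ∃ s : ℝ, γ t = p + s • d) ∨
    (∀ ε > (0 : ℝ), ∃ t ∈ Set.Ioo 0 L, t < ε ∧
      0 < (γ' t).1 * (γ'' t).2 - (γ' t).2 * (γ'' t).1) :=
  stmt_17_general L hL γ γ' γ'' p d hstart hdunit hd1 hγ'c hunit hd2 htan hside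
end
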